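/- arXiv:2305.00571 — 11 statements merged into one kernel-verified Lean document; each statement's English description precedes it below -/
import Mathlib

section
/- Let (α_1,…,α_m) ∈ ℚ^m ∩ [0,1]^m with α_1 + ⋯ + α_m ≤ 1. Then there are infinitely many primes p such that α_1,…,α_m add without carrying modulo p. -/
/-!
For primes `p ≡ 1 (mod q)`, where `q` is a common denominator of the `αᵢ` (infinitely many by
the Dirichlet-type `Nat.exists_prime_gt_modEq_one`), each `αᵢ` equals `cᵢ / (p - 1)` with
`cᵢ ∈ ℕ` and `∑ cᵢ ≤ p - 1`. Then `cᵢ / (p - 1) = ∑ₖ cᵢ / pᵏ` is a nonterminating expansion with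
constant digit `cᵢ`, and nonterminating expansions are unique (the leading digit of `x` is
`⌈p x⌉ - 1`), so the `k`-th digits of the `αᵢ` sum to `∑ cᵢ ≤ p - 1`.
-/

open Finset

lemma hasSum_div_pow_succ {b : ℝ} (hb : 1 < b) (c : ℝ) :
    HasSum (fun k : ℕ => c / b ^ (k + 1)) (c / (b - 1)) := by
  have hb0 : b ≠ 0 := by positivity
  have hb1 : b - 1 ≠ 0 := sub_ne_zero.2 hb.ne'
  have hterm (k : ℕ) : c / b * b⁻¹ ^ k = c / b ^ (k + 1) := by rw [inv_pow]; field_simp; ring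
  have hval : c / b * (1 - b⁻¹)⁻¹ = c / (b - 1) := by field_simp
  simpa only [hterm, hval] using
    (hasSum_geometric_of_lt_one (by positivity) (inv_lt_one_of_one_lt₀ hb)).mul_left (c / b)

/-- `d k` is the digit of `p ^ (-(k + 1))`. -/
structure IsNonterminatingDigits (p : ℕ) (d : ℕ → ℕ) (x : ℝ) : Prop where
  le_pred : ∀ k, d k ≤ p - 1
  hasSum : HasSum (fun k => (d k : ℝ) / (p : ℝ) ^ (k + 1)) x
  exists_ne_zero : ∀ N, ∃ k ≥ N, d k ≠ 0

namespace IsNonterminatingDigits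

variable {p : ℕ} {d e : ℕ → ℕ} {x : ℝ}

lemma two_le (h : IsNonterminatingDigits p d x) : 2 ≤ p := by
  obtain ⟨k, -, hk⟩ := h.exists_ne_zero 0
  have := h.le_pred k
  omega

lemma pos (h : IsNonterminatingDigits p d x) : 0 < x := by
  obtain ⟨k, -, hk⟩ := h.exists_ne_zero 0
  have hp : (0 : ℝ) < p := Nat.cast_pos.2 (by have := h.two_le; omega)
  have hdk : (0 : ℝ) < d k := by exact_mod_cast Nat.pos_of_ne_zero hk
  exact (div_pos hdk (by positivity)).trans_le (le_hasSum h.hasSum k fun j _ => by positivity)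

lemma le_one (h : IsNonterminatingDigits p d x) : x ≤ 1 := by
  have hp : (1 : ℝ) < p := by exact_mod_cast h.two_le
  have hp' : ((p - 1 : ℕ) : ℝ) = p - 1 := Nat.cast_pred (by have := h.two_le; omega)
  refine hasSum_le (fun k => ?_) h.hasSum (hasSum_div_pow_succ hp ((p : ℝ) - 1)) |>.trans_eq
    (div_self (sub_ne_zero.2 hp.ne'))
  gcongr
  rw [← hp']
  exact_mod_cast h.le_pred k

lemma shift (h : IsNonterminatingDigits p d x) :
    IsNonterminatingDigits p (fun k => d (k + 1)) (p * x - d 0) where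
  le_pred k := h.le_pred (k + 1)
  hasSum := by
    have hp : (p : ℝ) ≠ 0 := by have := h.two_le; positivity
    have hterm (k : ℕ) : (p : ℝ) * (d (k + 1) / p ^ (k + 1 + 1)) = d (k + 1) / p ^ (k + 1) := by
      field_simp; ring
    have hval : (p : ℝ) * (x - ∑ i ∈ range 1, (d i : ℝ) / (p : ℝ) ^ (i + 1)) = p * x - d 0 := by
      rw [sum_range_one]; field_simp; ring
    simpa only [hterm, hval] using ((hasSum_nat_add_iff' 1).2 h.hasSum).mul_left (p : ℝ)
  exists_ne_zero N := by
    obtain ⟨k, hk, hd⟩ := h.exists_ne_zero (N + 1)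
    exact ⟨k - 1, by omega, by rwa [Nat.sub_add_cancel (by omega)]⟩

lemma ceil_mul_eq (h : IsNonterminatingDigits p d x) : ⌈(p : ℝ) * x⌉ = d 0 + 1 := by
  have h' := h.shift
  rw [Int.ceil_eq_iff]
  push_cast
  constructor <;> linarith [h'.pos, h'.le_one]

lemma head_eq (hd : IsNonterminatingDigits p d x) (he : IsNonterminatingDigits p e x) :
    d 0 = e 0 := by
  have := hd.ceil_mul_eq.symm.trans he.ceil_mul_eq
  omega

lemma unique (hd : IsNonterminatingDigits p d x) (he : IsNonterminatingDigits p e x) : d = e := by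
  funext k
  induction k generalizing d e x with
  | zero => exact hd.head_eq he
  | succ k ih => exact ih hd.shift (hd.head_eq he ▸ he.shift)

lemma const {c : ℕ} (hc : c ≠ 0) (hcp : c ≤ p - 1) :
    IsNonterminatingDigits p (fun _ => c) (c / ((p : ℝ) - 1)) where
  le_pred _ := hcp
  hasSum := hasSum_div_pow_succ (by exact_mod_cast (by omega : 1 < p)) _
  exists_ne_zero N := ⟨N, le_rfl, hc⟩

end IsNonterminatingDigits

lemma digits_eq_const_of_hasSum {p c : ℕ} (hp : 0 < p) (hc : c ≤ p - 1) {d : ℕ → ℕ}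
    (hd : ∀ k, d k ≤ p - 1)
    (hs : HasSum (fun k => (d k : ℝ) / (p : ℝ) ^ (k + 1)) (c / ((p : ℝ) - 1)))
    (hnt : (c / ((p : ℝ) - 1)) = 0 ∨ ∀ N, ∃ k ≥ N, d k ≠ 0) : d = fun _ => c := by
  rcases eq_or_ne c 0 with rfl | hc0
  · rw [Nat.cast_zero, zero_div, hasSum_zero_iff_of_nonneg fun k => by positivity] at hs
    funext k
    simpa [hp.ne'] using congrFun hs k
  · have hp1 : (0 : ℝ) < p - 1 := by
      rw [sub_pos]; exact_mod_cast (by omega : 1 < p)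
    have hval : (c / ((p : ℝ) - 1)) ≠ 0 := by positivity
    exact IsNonterminatingDigits.unique ⟨hd, hs, hnt.resolve_left hval⟩ (.const hc0 hc)

lemma exists_natCast_eq_mul_of_den_dvd {α : ℚ} (hα : 0 ≤ α) {n : ℕ} (h : α.den ∣ n) :
    ∃ c : ℕ, (c : ℚ) = α * n := by
  obtain ⟨t, rfl⟩ := h
  refine ⟨α.num.toNat * t, ?_⟩
  rw [Nat.cast_mul, Nat.cast_mul, ← mul_assoc, Rat.mul_den_eq_num, ← Int.cast_natCast,
    Int.toNat_of_nonneg (Rat.num_nonneg.2 hα)]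

/-- If `(α_1,…,α_m) ∈ ℚ^m ∩ [0,1]^m` with `α_1 + ⋯ + α_m ≤ 1`, then there are
infinitely many primes `p` such that `α_1,…,α_m` add without carrying modulo `p`:
for every digit sequences of the nonterminating base-`p` expansions (digits of `0`
all zero), the `k`-th digits sum to at most `p - 1` for every `k`. -/
theorem stmt4 (m : ℕ) (α : Fin m → ℚ) (hα : ∀ i, α i ∈ Set.Icc (0 : ℚ) 1)
    (hsum : ∑ i, α i ≤ 1) :
    {p : ℕ | p.Prime ∧ ∀ d : Fin m → ℕ → ℕ,
      (∀ i, (∀ k, d i k ≤ p - 1) ∧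
        HasSum (fun k => (d i k : ℝ) / (p : ℝ) ^ (k + 1)) ((α i : ℝ)) ∧
        ((α i : ℝ) = 0 ∨ ∀ N, ∃ k ≥ N, d i k ≠ 0)) →
      ∀ k, ∑ i, d i k ≤ p - 1}.Infinite := by
  set q := ∏ i, (α i).den
  refine Set.infinite_of_forall_exists_gt fun n => ?_
  obtain ⟨p, hp, hnp, hmod⟩ :=
    Nat.exists_prime_gt_modEq_one n (prod_ne_zero_iff.2 fun i _ => (α i).den_nz)
  refine ⟨p, ⟨hp, fun d hd k => ?_⟩, hnp⟩
  have hqp : q ∣ p - 1 := (Nat.modEq_iff_dvd' hp.one_le).1 hmod.symm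
  choose c hc using fun i => exists_natCast_eq_mul_of_den_dvd (hα i).1
    ((dvd_prod_of_mem _ (mem_univ i)).trans hqp)
  have hc_le i : c i ≤ p - 1 := by
    exact_mod_cast (hc i).trans_le (mul_le_of_le_one_left (Nat.cast_nonneg _) (hα i).2)
  have hαc i : (α i : ℝ) = c i / ((p : ℝ) - 1) := by
    have h : ((c i : ℚ) : ℝ) = ((α i * (p - 1 : ℕ) : ℚ) : ℝ) := congrArg _ (hc i)
    have hp1 : (p : ℝ) - 1 ≠ 0 := sub_ne_zero.2 (by exact_mod_cast hp.one_lt.ne')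
    push_cast [Nat.cast_pred hp.pos] at h
    rw [h, mul_div_cancel_right₀ _ hp1]
  have hdc i : d i k = c i := by
    obtain ⟨hle, hs, hnt⟩ := hd i
    rw [hαc] at hs hnt
    exact congrFun (digits_eq_const_of_hasSum hp.pos (hc_le i) hle hs hnt) k
  have hsum_c : ((∑ i, c i : ℕ) : ℚ) ≤ (p - 1 : ℕ) := by
    push_cast [hc]
    rw [← sum_mul]
    exact mul_le_of_le_one_left (Nat.cast_nonneg _) hsum
  rw [sum_congr rfl fun i _ => hdc i]
  exact_mod_cast hsum_c
end

section
/- Let (α_1,…,α_m) ∈ ℚ^m ∩ [0,1]^m with α_1 + ⋯ + α_m > 1. Then for all sufficiently large primes p, the first digits of the nonterminating p-expansions satisfy α_1^(1) + ⋯ + α_m^(1) ≥ p. -/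
/-!
Writing `α = d₀/p + (tail)/p` with the tail an expansion of value at most `1`, the first digit
satisfies `d₀ ≥ p α - 1`. Summing over `i` gives `∑ dᵢ₀ ≥ p ∑ αᵢ - m`, which is at least `p`
as soon as `p (∑ αᵢ - 1) ≥ m`.
-/

open Real

lemma Real.mul_ofDigits_sub_one_le {b : ℕ} (digits : ℕ → Fin b) :
    b * ofDigits digits - 1 ≤ digits 0 := by
  have hb : (b : ℝ) ≠ 0 := by exact_mod_cast (Fin.pos (digits 0)).ne'
  have htail := ofDigits_le_one fun i ↦ digits (i + 1)
  rw [ofDigits_eq_sum_add_ofDigits digits 1]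
  simp only [Finset.sum_range_one, ofDigitsTerm, zero_add, pow_one]
  field_simp
  linarith

lemma mul_sub_one_le_first_digit {p : ℕ} (hp : 0 < p) {d : ℕ → ℕ} (hd : ∀ k, d k ≤ p - 1)
    {a : ℝ} (ha : HasSum (fun k ↦ (d k : ℝ) / (p : ℝ) ^ (k + 1)) a) :
    p * a - 1 ≤ d 0 := by
  let digits : ℕ → Fin p := fun k ↦ ⟨d k, by have := hd k; omega⟩
  have hdigits : ofDigits digits = a := by
    simpa only [ofDigits, ofDigitsTerm, div_eq_mul_inv] using ha.tsum_eq
  simpa only [← hdigits] using mul_ofDigits_sub_one_le digits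

theorem stmt5_general (m : ℕ) (α : Fin m → ℚ)
    (hsum : 1 < ∑ i, α i) :
    ∃ P : ℕ, ∀ p : ℕ, P ≤ p → p.Prime →
      ∀ d : Fin m → ℕ → ℕ,
        (∀ i, (∀ k, d i k ≤ p - 1) ∧
          HasSum (fun k => (d i k : ℝ) / (p : ℝ) ^ (k + 1)) ((α i : ℝ)) ∧
          ((α i : ℝ) = 0 ∨ ∀ N, ∃ k ≥ N, d i k ≠ 0)) →
        p ≤ ∑ i, d i 0 := by
  set s : ℝ := ∑ i, (α i : ℝ) with hs
  have hs1 : 0 < s - 1 := by rw [hs, ← Rat.cast_sum]; exact_mod_cast sub_pos.2 hsum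
  refine ⟨⌈m / (s - 1)⌉₊, fun p hP hprime d hd ↦ ?_⟩
  have hm : (m : ℝ) ≤ p * (s - 1) := (div_le_iff₀ hs1).1 (Nat.ceil_le.1 hP)
  have hdigits : p * s - m ≤ ∑ i, (d i 0 : ℝ) :=
    calc p * s - m = ∑ i, ((p : ℝ) * α i - 1) := by simp [hs, Finset.mul_sum]
      _ ≤ ∑ i, (d i 0 : ℝ) := Finset.sum_le_sum fun i _ ↦
        mul_sub_one_le_first_digit hprime.pos (hd i).1 (hd i).2.1
  exact_mod_cast (show (p : ℝ) ≤ ∑ i, (d i 0 : ℝ) by linarith)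

/-- If `(α_1,…,α_m) ∈ ℚ^m ∩ [0,1]^m` with `α_1 + ⋯ + α_m > 1`, then for all
sufficiently large primes `p`, the first digits of the nonterminating base-`p`
expansions satisfy `α_1^(1) + ⋯ + α_m^(1) ≥ p` (the digits of `0` are all zero).
Here `d i 0` denotes the first digit of `α i`. -/
theorem stmt5 (m : ℕ) (α : Fin m → ℚ) (hα : ∀ i, α i ∈ Set.Icc (0 : ℚ) 1)
    (hsum : 1 < ∑ i, α i) :
    ∃ P : ℕ, ∀ p : ℕ, P ≤ p → p.Prime →
      ∀ d : Fin m → ℕ → ℕ,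
        (∀ i, (∀ k, d i k ≤ p - 1) ∧
          HasSum (fun k => (d i k : ℝ) / (p : ℝ) ^ (k + 1)) ((α i : ℝ)) ∧
          ((α i : ℝ) = 0 ∨ ∀ N, ∃ k ≥ N, d i k ≠ 0)) →
        p ≤ ∑ i, d i 0 :=
  stmt5_general m α hsum
end

section
/- Let E be an m×N matrix with nonnegative integer entries and no zero column, let P = {γ ∈ ℝ_{≥0}^N : E·γ ⪯ 1_m} be the associated splitting polytope, and let N_E be the convex hull of ⋃_{a column of E} (a + ℝ_{≥0}^m) (the Newton polyhedron of the column set). Then {|γ| : γ ∈ P \ {0}} = {τ ∈ ℝ_{>0} : (1/τ,…,1/τ) ∈ N_E}. In particular, max{|γ| : γ ∈ P} = max{τ > 0 : (1/τ,…,1/τ) ∈ N_E}. -/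
/-- The splitting polytope `{γ ∈ ℝ_{≥0}^N : E·γ ⪯ 1_m}` of an `m × N`
nonnegative integer matrix `E` with no zero column. -/
def splittingPolytope (m N : ℕ) (E : Matrix (Fin m) (Fin N) ℕ) : Set (Fin N → ℝ) :=
  {γ | (∀ j, 0 ≤ γ j) ∧ ∀ i, ∑ j, (E i j : ℝ) * γ j ≤ 1}

/-- The Newton polyhedron of the column set of `E`: the convex hull of
`⋃_{a column of E} (a + ℝ_{≥0}^m)`. -/
def newtonPolyhedron (m N : ℕ) (E : Matrix (Fin m) (Fin N) ℕ) : Set (Fin m → ℝ) :=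
  convexHull ℝ (⋃ j : Fin N, {x : Fin m → ℝ | ∀ i, (E i j : ℝ) ≤ x i})

lemma key (m N : ℕ) (E : Matrix (Fin m) (Fin N) ℕ) :
    {s : ℝ | ∃ γ ∈ splittingPolytope m N E, γ ≠ 0 ∧ ∑ j, γ j = s} =
      {τ : ℝ | 0 < τ ∧ (fun _ : Fin m => 1 / τ) ∈ newtonPolyhedron m N E} := by
  classical
  ext s
  simp only [Set.mem_setOf_eq]
  constructor
  · rintro ⟨γ, ⟨hpos, hconstr⟩, hne, rfl⟩
    -- s = ∑ γ j > 0
    obtain ⟨j0, hj0⟩ : ∃ j, γ j ≠ 0 := Function.ne_iff.mp hne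
    have hspos : 0 < ∑ j, γ j :=
      Finset.sum_pos' (fun j _ => hpos j)
        ⟨j0, Finset.mem_univ _, lt_of_le_of_ne (hpos j0) (Ne.symm hj0)⟩
    set s := ∑ j, γ j with hs
    refine ⟨hspos, ?_⟩
    set d : Fin m → ℝ := fun i => 1 / s - ∑ j, γ j / s * (E i j : ℝ) with hd_def
    have hd : ∀ i, 0 ≤ d i := by
      intro i
      have h1 : ∑ j, γ j / s * (E i j : ℝ) = (∑ j, (E i j : ℝ) * γ j) / s := by
        rw [Finset.sum_div]; exact Finset.sum_congr rfl fun j _ => by ring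
      simp only [hd_def, h1, sub_nonneg]
      gcongr
      exact hconstr i
    have hsum1 : ∑ j, γ j / s = 1 := by
      rw [← Finset.sum_div, ← hs, div_self hspos.ne']
    set z : Fin N → (Fin m → ℝ) := fun j i => (E i j : ℝ) + d i with hz_def
    have hzmem : ∀ j, z j ∈ ⋃ j : Fin N, {x : Fin m → ℝ | ∀ i, (E i j : ℝ) ≤ x i} := by
      intro j
      rw [Set.mem_iUnion]
      exact ⟨j, fun i => le_add_of_nonneg_right (hd i)⟩
    have hmem : ∑ j, (γ j / s) • z j ∈ newtonPolyhedron m N E := by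
      exact (convex_convexHull ℝ _).sum_mem
        (fun j _ => div_nonneg (hpos j) hspos.le) hsum1
        (fun j _ => subset_convexHull ℝ _ (hzmem j))
    have heq : ∑ j, (γ j / s) • z j = fun _ : Fin m => 1 / s := by
      funext i
      simp only [Finset.sum_apply, Pi.smul_apply, smul_eq_mul, hz_def]
      have : ∑ j, γ j / s * ((E i j : ℝ) + d i)
          = (∑ j, γ j / s * (E i j : ℝ)) + (∑ j, γ j / s) * d i := by
        rw [Finset.sum_mul, ← Finset.sum_add_distrib]
        exact Finset.sum_congr rfl fun j _ => by ring
      rw [this, hsum1, one_mul, hd_def]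
      ring
    rwa [heq] at hmem
  · rintro ⟨hτ, hmem⟩
    rw [newtonPolyhedron, convexHull_eq] at hmem
    obtain ⟨ι, t, w, z, hw0, hw1, hzmem, hcm⟩ := hmem
    have ht : t.Nonempty := Finset.nonempty_of_sum_ne_zero (by rw [hw1]; exact one_ne_zero)
    have hN : Nonempty (Fin N) := by
      obtain ⟨k, hk⟩ := ht
      have := hzmem k hk
      rw [Set.mem_iUnion] at this
      obtain ⟨j, -⟩ := this
      exact ⟨j⟩
    set jk : ι → Fin N := fun k =>
      if h : ∃ j, ∀ i, (E i j : ℝ) ≤ z k i then h.choose else Classical.arbitrary _ with hjk_def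
    have hjk : ∀ k ∈ t, ∀ i, (E i (jk k) : ℝ) ≤ z k i := by
      intro k hk i
      have hz' := hzmem k hk
      rw [Set.mem_iUnion] at hz'
      obtain ⟨j, hj⟩ := hz'
      have h : ∃ j, ∀ i, (E i j : ℝ) ≤ z k i := ⟨j, hj⟩
      simp only [hjk_def, dif_pos h]
      exact h.choose_spec i
    set γ : Fin N → ℝ := fun j => s * ∑ k ∈ t.filter (fun k => jk k = j), w k with hγ_def
    have hγsum : ∑ j, γ j = s := by
      simp only [hγ_def]
      rw [← Finset.mul_sum, Finset.sum_fiberwise, hw1, mul_one]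
    have hγpos : ∀ j, 0 ≤ γ j := fun j =>
      mul_nonneg hτ.le (Finset.sum_nonneg fun k hk => hw0 k (Finset.mem_filter.mp hk).1)
    have hv : ∀ i, ∑ k ∈ t, w k * z k i = 1 / s := by
      intro i
      rw [Finset.centerMass_eq_of_sum_1 _ _ hw1] at hcm
      have := congrFun hcm i
      simpa [Finset.sum_apply] using this
    refine ⟨γ, ⟨hγpos, ?_⟩, ?_, hγsum⟩
    · intro i
      have hc : ∑ j, (E i j : ℝ) * γ j
          = s * ∑ k ∈ t, (E i (jk k) : ℝ) * w k := by
        rw [← Finset.sum_fiberwise t jk (fun k => (E i (jk k) : ℝ) * w k), Finset.mul_sum]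
        refine Finset.sum_congr rfl fun j _ => ?_
        have : ∑ k ∈ t.filter (fun k => jk k = j), (E i (jk k) : ℝ) * w k
            = (E i j : ℝ) * ∑ k ∈ t.filter (fun k => jk k = j), w k := by
          rw [Finset.mul_sum]
          exact Finset.sum_congr rfl fun k hk => by rw [(Finset.mem_filter.mp hk).2]
        rw [this, hγ_def]; ring
      rw [hc]
      have hle : ∑ k ∈ t, (E i (jk k) : ℝ) * w k ≤ ∑ k ∈ t, w k * z k i := by
        refine Finset.sum_le_sum fun k hk => ?_
        rw [mul_comm]
        exact mul_le_mul_of_nonneg_left (hjk k hk i) (hw0 k hk)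
      calc s * ∑ k ∈ t, (E i (jk k) : ℝ) * w k
          ≤ s * ∑ k ∈ t, w k * z k i := by
            exact mul_le_mul_of_nonneg_left hle hτ.le
        _ = s * (1 / s) := by rw [hv i]
        _ = 1 := by field_simp
    · intro h
      rw [h] at hγsum
      simp only [Pi.zero_apply, Finset.sum_const_zero] at hγsum
      exact hτ.ne' hγsum.symm


/-- For a nonnegative integer matrix `E` with no zero column, the set of coordinate
sums `|γ|` over nonzero points of the splitting polytope equals the set of `τ > 0`
with `(1/τ,…,1/τ)` in the Newton polyhedron of the columns; in particular the two
maxima coincide. -/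
theorem stmt7 (m N : ℕ) (E : Matrix (Fin m) (Fin N) ℕ)
    (hE : ∀ j, ∃ i, E i j ≠ 0) :
    {s : ℝ | ∃ γ ∈ splittingPolytope m N E, γ ≠ 0 ∧ ∑ j, γ j = s} =
      {τ : ℝ | 0 < τ ∧ (fun _ : Fin m => 1 / τ) ∈ newtonPolyhedron m N E} ∧
    sSup {s : ℝ | ∃ γ ∈ splittingPolytope m N E, ∑ j, γ j = s} =
      sSup {τ : ℝ | 0 < τ ∧ (fun _ : Fin m => 1 / τ) ∈ newtonPolyhedron m N E} := by
  refine ⟨key m N E, ?_⟩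
  set A := {s : ℝ | ∃ γ ∈ splittingPolytope m N E, γ ≠ 0 ∧ ∑ j, γ j = s} with hA
  have hzero : (0 : Fin N → ℝ) ∈ splittingPolytope m N E := by
    constructor
    · intro j; simp
    · intro i; simp
  have hSins : {s : ℝ | ∃ γ ∈ splittingPolytope m N E, ∑ j, γ j = s} = insert 0 A := by
    ext s
    simp only [Set.mem_setOf_eq, Set.mem_insert_iff, hA]
    constructor
    · rintro ⟨γ, hγ, rfl⟩
      by_cases hγ0 : γ = 0
      · left; rw [hγ0]; simp
      · right; exact ⟨γ, hγ, hγ0, rfl⟩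
    · rintro (rfl | ⟨γ, hγ, hne, rfl⟩)
      · exact ⟨0, hzero, by simp⟩
      · exact ⟨γ, hγ, rfl⟩
  have hbdd : BddAbove A := by
    refine ⟨N, ?_⟩
    rintro s ⟨γ, ⟨hpos, hconstr⟩, -, rfl⟩
    have h1 : ∀ j, γ j ≤ 1 := by
      intro j
      obtain ⟨i, hi⟩ := hE j
      have hE1 : (1 : ℝ) ≤ (E i j : ℝ) := by
        exact_mod_cast Nat.one_le_iff_ne_zero.mpr hi
      calc γ j = 1 * γ j := (one_mul _).symm
        _ ≤ (E i j : ℝ) * γ j := mul_le_mul_of_nonneg_right hE1 (hpos j)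
        _ ≤ ∑ j', (E i j' : ℝ) * γ j' :=
            Finset.single_le_sum (f := fun j' => (E i j' : ℝ) * γ j')
              (fun j' _ => mul_nonneg (Nat.cast_nonneg _) (hpos j'))
              (Finset.mem_univ j)
        _ ≤ 1 := hconstr i
    calc ∑ j, γ j ≤ ∑ _j : Fin N, (1 : ℝ) := Finset.sum_le_sum fun j _ => h1 j
      _ = N := by simp
  have hkey : A = {τ : ℝ | 0 < τ ∧ (fun _ : Fin m => 1 / τ) ∈ newtonPolyhedron m N E} := by
    rw [hA]; exact key m N E
  rw [hSins, ← hkey]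
  rcases Set.eq_empty_or_nonempty A with hAe | hAne
  · rw [hAe]
    simp [Real.sSup_empty]
  · rw [csSup_insert hbdd hAne]
    obtain ⟨a, ha⟩ := hAne
    have hapos : 0 < a := by
      have ha' := ha
      rw [hkey] at ha'
      exact ha'.1
    exact sup_eq_right.mpr (le_trans hapos.le (le_csSup hbdd ha))
end

section
/- Let E_f be the 3×3 matrix with rows (a,1,0), (0,b,1), (0,0,c), where a,b,c ≥ 1 are integers, and P = {γ ∈ ℝ_{≥0}^3 : aγ_1+γ_2 ≤ 1, bγ_2+γ_3 ≤ 1, cγ_3 ≤ 1}. If c = 1, or c ≠ 1 and a ≠ 1, then the point ρ = ((bc−c+1)/(abc), (c−1)/(bc), 1/c) is the unique point of P maximizing the coordinate sum |γ| = γ_1+γ_2+γ_3. -/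
/-!
With `Lᵢ` the three constraint forms `aγ₁ + γ₂`, `bγ₂ + γ₃`, `cγ₃`, the coordinate sum has the
nonnegative dual certificate
`abc (γ₁ + γ₂ + γ₃) = bc L₁ + c(a - 1) L₂ + (ab - a + 1) L₃`.
Since `ρ` makes all three constraints tight, `abc (|ρ| - |γ|)` is the certificate applied to the
slacks `1 - Lᵢ(γ) ≥ 0`, so `|γ| ≤ |ρ|`, and equality forces every constraint with a positive weight
to be tight at `γ`. The weights of `L₁` and `L₃` are always positive; that of `L₂` is positive when
`a ≠ 1`, while for `c = 1` the tight `L₃` already forces `γ₂ = 0` and hence `L₂ = 1`. The triangular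
system `L₁ = L₂ = L₃ = 1` has `ρ` as its only solution.
-/

namespace SplittingPolytope

variable {a b c γ₁ γ₂ γ₃ ρ₁ ρ₂ ρ₃ : ℝ}

def Tight (a b c γ₁ γ₂ γ₃ : ℝ) : Prop :=
  a * γ₁ + γ₂ = 1 ∧ b * γ₂ + γ₃ = 1 ∧ c * γ₃ = 1

lemma tight_vertex (ha : a ≠ 0) (hb : b ≠ 0) (hc : c ≠ 0) :
    Tight a b c ((b * c - c + 1) / (a * b * c)) ((c - 1) / (b * c)) (1 / c) := by
  refine ⟨?_, ?_, ?_⟩ <;> field_simp <;> ring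

lemma eq_of_tight_of_tight (ha : a ≠ 0) (hb : b ≠ 0) (hc : c ≠ 0)
    (hγ : Tight a b c γ₁ γ₂ γ₃) (hρ : Tight a b c ρ₁ ρ₂ ρ₃) :
    γ₁ = ρ₁ ∧ γ₂ = ρ₂ ∧ γ₃ = ρ₃ := by
  obtain ⟨hγ₁, hγ₂, hγ₃⟩ := hγ
  obtain ⟨hρ₁, hρ₂, hρ₃⟩ := hρ
  have e₃ : γ₃ = ρ₃ := mul_left_cancel₀ hc (hγ₃.trans hρ₃.symm)
  have e₂ : γ₂ = ρ₂ := mul_left_cancel₀ hb (by linarith)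
  have e₁ : γ₁ = ρ₁ := mul_left_cancel₀ ha (by linarith)
  exact ⟨e₁, e₂, e₃⟩

lemma mul_sub_sum_eq_slacks (hρ : Tight a b c ρ₁ ρ₂ ρ₃) :
    a * b * c * ((ρ₁ + ρ₂ + ρ₃) - (γ₁ + γ₂ + γ₃)) =
      b * c * (1 - (a * γ₁ + γ₂)) + c * (a - 1) * (1 - (b * γ₂ + γ₃)) +
        (a * b - a + 1) * (1 - c * γ₃) := by
  obtain ⟨hρ₁, hρ₂, hρ₃⟩ := hρ
  linear_combination b * c * hρ₁ + c * (a - 1) * hρ₂ + (a * b - a + 1) * hρ₃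

lemma sum_le_of_tight (ha : 1 ≤ a) (hb : 1 ≤ b) (hc : 0 < c)
    (h₁ : a * γ₁ + γ₂ ≤ 1) (h₂ : b * γ₂ + γ₃ ≤ 1) (h₃ : c * γ₃ ≤ 1)
    (hρ : Tight a b c ρ₁ ρ₂ ρ₃) : γ₁ + γ₂ + γ₃ ≤ ρ₁ + ρ₂ + ρ₃ := by
  have hslack : 0 ≤ a * b * c * ((ρ₁ + ρ₂ + ρ₃) - (γ₁ + γ₂ + γ₃)) := by
    rw [mul_sub_sum_eq_slacks hρ]
    have : 0 ≤ a * b - a + 1 := by nlinarith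
    have : 0 ≤ c * (a - 1) := mul_nonneg hc.le (by linarith)
    have : 0 ≤ b * c := by positivity
    refine add_nonneg (add_nonneg ?_ ?_) ?_ <;> apply mul_nonneg <;> linarith
  exact sub_nonneg.mp (nonneg_of_mul_nonneg_right hslack (by positivity))

lemma tight_of_sum_eq (ha : 1 ≤ a) (hb : 1 ≤ b) (hc : 0 < c) (hcase : c = 1 ∨ 1 < a)
    (hγ₂ : 0 ≤ γ₂) (h₁ : a * γ₁ + γ₂ ≤ 1) (h₂ : b * γ₂ + γ₃ ≤ 1) (h₃ : c * γ₃ ≤ 1)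
    (hρ : Tight a b c ρ₁ ρ₂ ρ₃) (hsum : γ₁ + γ₂ + γ₃ = ρ₁ + ρ₂ + ρ₃) :
    Tight a b c γ₁ γ₂ γ₃ := by
  have hw₁ : 0 < b * c := by positivity
  have hw₂ : 0 ≤ c * (a - 1) := mul_nonneg hc.le (by linarith)
  have hw₃ : 0 < a * b - a + 1 := by nlinarith
  have hslacks := mul_sub_sum_eq_slacks (γ₁ := γ₁) (γ₂ := γ₂) (γ₃ := γ₃) hρ
  rw [hsum, sub_self, mul_zero] at hslacks
  have s₁ := mul_nonneg hw₁.le (sub_nonneg.mpr h₁)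
  have s₂ := mul_nonneg hw₂ (sub_nonneg.mpr h₂)
  have s₃ := mul_nonneg hw₃.le (sub_nonneg.mpr h₃)
  have t₁ : a * γ₁ + γ₂ = 1 := by
    have := (mul_eq_zero_iff_left hw₁.ne').mp (by linarith : b * c * (1 - (a * γ₁ + γ₂)) = 0)
    linarith
  have t₃ : c * γ₃ = 1 := by
    have := (mul_eq_zero_iff_left hw₃.ne').mp (by linarith : (a * b - a + 1) * (1 - c * γ₃) = 0)
    linarith
  refine ⟨t₁, ?_, t₃⟩
  rcases hcase with rfl | ha₁
  · -- with `c = 1`, `γ₃ = 1` leaves no room for `γ₂ > 0`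
    linarith [mul_nonneg (zero_le_one.trans hb) hγ₂]
  · have hw₂' : c * (a - 1) ≠ 0 := (mul_pos hc (by linarith)).ne'
    have := (mul_eq_zero_iff_left hw₂').mp (by linarith : c * (a - 1) * (1 - (b * γ₂ + γ₃)) = 0)
    linarith

end SplittingPolytope

open SplittingPolytope

/-- For the splitting polytope `P = {γ ∈ ℝ_{≥0}^3 : aγ₁+γ₂ ≤ 1, bγ₂+γ₃ ≤ 1, cγ₃ ≤ 1}`
of the mapping `(x^a + x y^b, y z^c)` with integers `a,b,c ≥ 1`: if `c = 1`, or
`c ≠ 1` and `a ≠ 1`, then `ρ = ((bc−c+1)/(abc), (c−1)/(bc), 1/c)` is the unique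
point of `P` maximizing the coordinate sum. -/
theorem stmt8 (a b c : ℕ) (ha : 1 ≤ a) (hb : 1 ≤ b) (hc : 1 ≤ c)
    (hcase : c = 1 ∨ (c ≠ 1 ∧ a ≠ 1)) :
    (((0:ℝ) ≤ ((b:ℝ) * c - c + 1) / ((a:ℝ) * b * c) ∧
      (0:ℝ) ≤ ((c:ℝ) - 1) / ((b:ℝ) * c) ∧ (0:ℝ) ≤ 1 / (c:ℝ) ∧
      (a:ℝ) * (((b:ℝ) * c - c + 1) / ((a:ℝ) * b * c)) + ((c:ℝ) - 1) / ((b:ℝ) * c) ≤ 1 ∧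
      (b:ℝ) * (((c:ℝ) - 1) / ((b:ℝ) * c)) + 1 / (c:ℝ) ≤ 1 ∧
      (c:ℝ) * (1 / (c:ℝ)) ≤ 1) ∧
    ∀ γ₁ γ₂ γ₃ : ℝ, 0 ≤ γ₁ → 0 ≤ γ₂ → 0 ≤ γ₃ →
      (a:ℝ) * γ₁ + γ₂ ≤ 1 → (b:ℝ) * γ₂ + γ₃ ≤ 1 → (c:ℝ) * γ₃ ≤ 1 →
      (γ₁ + γ₂ + γ₃ ≤ ((b:ℝ) * c - c + 1) / ((a:ℝ) * b * c) + ((c:ℝ) - 1) / ((b:ℝ) * c) + 1 / (c:ℝ) ∧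
        (γ₁ + γ₂ + γ₃ =
            ((b:ℝ) * c - c + 1) / ((a:ℝ) * b * c) + ((c:ℝ) - 1) / ((b:ℝ) * c) + 1 / (c:ℝ) →
          γ₁ = ((b:ℝ) * c - c + 1) / ((a:ℝ) * b * c) ∧
          γ₂ = ((c:ℝ) - 1) / ((b:ℝ) * c) ∧ γ₃ = 1 / (c:ℝ)))) := by
  have hA : (1 : ℝ) ≤ a := by exact_mod_cast ha
  have hB : (1 : ℝ) ≤ b := by exact_mod_cast hb
  have hC : (1 : ℝ) ≤ c := by exact_mod_cast hc
  have hcase' : (c : ℝ) = 1 ∨ 1 < (a : ℝ) := by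
    rcases hcase with h | ⟨-, h⟩
    · exact Or.inl (by exact_mod_cast h)
    · exact Or.inr (by exact_mod_cast lt_of_le_of_ne ha (Ne.symm h))
  have hρ := tight_vertex (a := (a : ℝ)) (b := b) (c := c) (by positivity) (by positivity)
    (by positivity)
  refine ⟨⟨?_, ?_, by positivity, hρ.1.le, hρ.2.1.le, hρ.2.2.le⟩, ?_⟩
  · exact div_nonneg (by nlinarith) (by positivity)
  · exact div_nonneg (by linarith) (by positivity)
  · intro γ₁ γ₂ γ₃ _ hγ₂ _ h₁ h₂ h₃
    refine ⟨sum_le_of_tight hA hB (by positivity) h₁ h₂ h₃ hρ, fun hsum => ?_⟩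
    exact eq_of_tight_of_tight (by positivity) (by positivity) (by positivity)
      (tight_of_sum_eq hA hB (by positivity) hcase' hγ₂ h₁ h₂ h₃ hρ hsum) hρ
end

section
/- Let m ≥ 1 and n be integers with n > 4 + 5/m, let E be the 2×6 integer matrix with rows (4,3,2,1,0,n) and (5,m+5,2m+5,3m+5,4m+5,0), and P = {γ ∈ ℝ_{≥0}^6 : E·γ ⪯ (1,1)}. Then the unique point of P maximizing the coordinate sum is (1/5, 0, 0, 0, 0, 1/(5n)), and its coordinate sum is 1/5 + 1/(5n). -/
/-! The bound is LP duality: weighting the two rows of `E` by `5` and `n - 4` gives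
`5n·|γ| + (mn - 4m - 5)(γ₁ + 2γ₂ + 3γ₃ + 4γ₄) = 5·(Eγ)₁ + (n - 4)·(Eγ)₂ ≤ n + 1`,
and `n > 4 + 5/m` makes both weights and the coefficient `mn - 4m - 5` positive. Equality therefore
forces `γ₁ = ⋯ = γ₄ = 0` and both rows of `E·γ ⪯ (1,1)` to be tight, which pins down `γ₀` and `γ₅`. -/

namespace SplittingPolytope

def rowX (n : ℝ) (γ : Fin 6 → ℝ) : ℝ := 4 * γ 0 + 3 * γ 1 + 2 * γ 2 + γ 3 + n * γ 5

def rowY (m : ℝ) (γ : Fin 6 → ℝ) : ℝ :=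
  5 * γ 0 + (m + 5) * γ 1 + (2 * m + 5) * γ 2 + (3 * m + 5) * γ 3 + (4 * m + 5) * γ 4

def polytope (m n : ℝ) : Set (Fin 6 → ℝ) := {γ | (∀ j, 0 ≤ γ j) ∧ rowX n γ ≤ 1 ∧ rowY m γ ≤ 1}

noncomputable def vertex (n : ℝ) : Fin 6 → ℝ := ![1/5, 0, 0, 0, 0, 1/(5*n)]

theorem sum_vertex (n : ℝ) : ∑ j, vertex n j = 1/5 + 1/(5*n) := by
  simp [vertex, Fin.sum_univ_six]

theorem vertex_mem (m : ℝ) {n : ℝ} (hn : 0 < n) : vertex n ∈ polytope m n := by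
  refine ⟨fun j => ?_, ?_, ?_⟩
  · fin_cases j <;> simp [vertex, hn.le]
  · show 4 * (1/5) + 3 * 0 + 2 * 0 + 0 + n * (1/(5*n)) ≤ 1
    field_simp
    norm_num
  · simp [rowY, vertex]

theorem dual_certificate (m n : ℝ) (γ : Fin 6 → ℝ) :
    5 * n * ∑ j, γ j + (m * n - 4 * m - 5) * (γ 1 + 2 * γ 2 + 3 * γ 3 + 4 * γ 4)
      = 5 * rowX n γ + (n - 4) * rowY m γ := by
  simp only [Fin.sum_univ_six, rowX, rowY]
  ring

section

variable {m n : ℝ} (hn : 4 < n) (hmn : 4 * m + 5 < m * n)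
include hn hmn

theorem five_mul_mul_sum_le {γ : Fin 6 → ℝ} (hγ : γ ∈ polytope m n) :
    5 * n * ∑ j, γ j ≤ n + 1 := by
  obtain ⟨hpos, hX, hY⟩ := hγ
  have hw : 0 ≤ γ 1 + 2 * γ 2 + 3 * γ 3 + 4 * γ 4 := by
    linarith [hpos 1, hpos 2, hpos 3, hpos 4]
  linarith [dual_certificate m n γ, mul_nonneg (by linarith : 0 ≤ m * n - 4 * m - 5) hw,
    mul_le_mul_of_nonneg_left hY (by linarith : 0 ≤ n - 4)]

theorem sum_le_of_mem {γ : Fin 6 → ℝ} (hγ : γ ∈ polytope m n) :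
    ∑ j, γ j ≤ 1/5 + 1/(5*n) := by
  have h := five_mul_mul_sum_le hn hmn hγ
  rw [show (1:ℝ)/5 + 1/(5*n) = (n + 1) / (5 * n) by field_simp, le_div_iff₀ (by linarith)]
  linarith

theorem eq_vertex_of_sum_eq {γ : Fin 6 → ℝ} (hγ : γ ∈ polytope m n)
    (hsum : ∑ j, γ j = 1/5 + 1/(5*n)) : γ = vertex n := by
  obtain ⟨hpos, hX, hY⟩ := hγ
  have hn0 : n ≠ 0 := by linarith
  have hS : 5 * n * ∑ j, γ j = n + 1 := by rw [hsum]; field_simp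
  have hcert := dual_certificate m n γ
  have hw : γ 1 + 2 * γ 2 + 3 * γ 3 + 4 * γ 4 = 0 := by
    refine le_antisymm (nonpos_of_mul_nonpos_right ?_ (by linarith : 0 < m * n - 4 * m - 5))
      (by linarith [hpos 1, hpos 2, hpos 3, hpos 4])
    linarith [mul_le_mul_of_nonneg_left hY (by linarith : 0 ≤ n - 4)]
  rw [hw, mul_zero, add_zero] at hcert
  have hYeq : rowY m γ = 1 := by
    refine le_antisymm hY (le_of_mul_le_mul_left ?_ (by linarith : 0 < n - 4))
    linarith
  have hXeq : rowX n γ = 1 := by rw [hYeq] at hcert; linarith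
  obtain ⟨h1, h2, h3, h4⟩ : γ 1 = 0 ∧ γ 2 = 0 ∧ γ 3 = 0 ∧ γ 4 = 0 := by
    refine ⟨?_, ?_, ?_, ?_⟩ <;> linarith [hpos 1, hpos 2, hpos 3, hpos 4]
  simp only [rowX, rowY, h1, h2, h3, h4] at hXeq hYeq
  have h0 : γ 0 = 1/5 := by linarith
  have h5 : γ 5 = 1/(5*n) := by
    rw [eq_div_iff (by positivity)]
    linarith
  funext i
  fin_cases i <;> simp [vertex, h0, h1, h2, h3, h4, h5]

end

theorem four_mul_add_five_lt_mul {m n : ℝ} (hm : 0 < m) (h : 4 + 5 / m < n) :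
    4 * m + 5 < m * n := by
  have : 5 < (n - 4) * m := (div_lt_iff₀ hm).mp (by linarith)
  linarith

end SplittingPolytope

open SplittingPolytope

/-- For integers `m ≥ 1`, `n > 4 + 5/m`, the splitting polytope
`P = {γ ∈ ℝ_{≥0}^6 : 4γ₀+3γ₁+2γ₂+γ₃+nγ₅ ≤ 1, 5γ₀+(m+5)γ₁+(2m+5)γ₂+(3m+5)γ₃+(4m+5)γ₄ ≤ 1}`
of `(y^5(x+y^m)^4, x^n)` has unique coordinate-sum maximizer `(1/5,0,0,0,0,1/(5n))`,
whose coordinate sum is `1/5 + 1/(5n)`. -/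
theorem stmt10 (m n : ℕ) (hm : 1 ≤ m) (hn : (4 : ℝ) + 5 / (m:ℝ) < (n:ℝ)) :
    (((![1/5, 0, 0, 0, 0, 1/(5*(n:ℝ))] : Fin 6 → ℝ) ∈
        {γ : Fin 6 → ℝ | (∀ j, 0 ≤ γ j) ∧
          4 * γ 0 + 3 * γ 1 + 2 * γ 2 + γ 3 + (n:ℝ) * γ 5 ≤ 1 ∧
          5 * γ 0 + ((m:ℝ)+5) * γ 1 + (2*(m:ℝ)+5) * γ 2 + (3*(m:ℝ)+5) * γ 3
            + (4*(m:ℝ)+5) * γ 4 ≤ 1}) ∧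
      (∀ γ ∈ {γ : Fin 6 → ℝ | (∀ j, 0 ≤ γ j) ∧
          4 * γ 0 + 3 * γ 1 + 2 * γ 2 + γ 3 + (n:ℝ) * γ 5 ≤ 1 ∧
          5 * γ 0 + ((m:ℝ)+5) * γ 1 + (2*(m:ℝ)+5) * γ 2 + (3*(m:ℝ)+5) * γ 3
            + (4*(m:ℝ)+5) * γ 4 ≤ 1},
        (∑ j, γ j ≤ 1/5 + 1/(5*(n:ℝ))) ∧
          (∑ j, γ j = 1/5 + 1/(5*(n:ℝ)) →
            γ = (![1/5, 0, 0, 0, 0, 1/(5*(n:ℝ))] : Fin 6 → ℝ))) ∧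
      (∑ j, (![1/5, 0, 0, 0, 0, 1/(5*(n:ℝ))] : Fin 6 → ℝ) j = 1/5 + 1/(5*(n:ℝ)))) := by
  have hm0 : (0:ℝ) < m := by exact_mod_cast hm
  have hn4 : (4:ℝ) < n := by linarith [div_pos (by norm_num : (0:ℝ) < 5) hm0]
  have hmn := four_mul_add_five_lt_mul hm0 hn
  exact ⟨vertex_mem m (by linarith), fun γ hγ =>
    ⟨sum_le_of_mem hn4 hmn hγ, eq_vertex_of_sum_eq hn4 hmn hγ⟩, sum_vertex n⟩
end

section
/- Let R = k[x_1,…,x_m] over a field k of characteristic p > 0 with maximal ideal m = (x_1,…,x_m), and let a ⊆ m be a nonzero ideal. For each e ≥ 1 set ν_a(p^e) = max{c ∈ ℤ_{≥0} : a^c ⊄ m^{[p^e]}}, where m^{[p^e]} = (x_1^{p^e},…,x_m^{p^e}). Then ν_a(p^{e+1}) ≥ p·ν_a(p^e) for all e, and consequently the sequence ν_a(p^e)/p^e is nondecreasing and the limit fpt(a) = lim_{e→∞} ν_a(p^e)/p^e exists in [0, m·t] for any t such that a is generated by t elements (in particular the limit exists as a real number). -/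
open MvPolynomial

section Aux

variable {p m : ℕ} {k : Type*}

/-- Membership in the Frobenius-power monomial ideal. -/
lemma memJ_iff [CommSemiring k] (q : ℕ) (f : MvPolynomial (Fin m) k) :
    f ∈ Ideal.span (Set.range fun i : Fin m => (X i : MvPolynomial (Fin m) k) ^ q) ↔
      ∀ d ∈ f.support, ∃ i, q ≤ d i := by
  have hset : (Set.range fun i : Fin m => (X i : MvPolynomial (Fin m) k) ^ q) =
      (fun s => monomial s (1 : k)) '' (Set.range fun i : Fin m => Finsupp.single i q) := by
    ext f
    constructor
    · rintro ⟨i, rfl⟩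
      exact ⟨Finsupp.single i q, ⟨i, rfl⟩, (X_pow_eq_monomial).symm⟩
    · rintro ⟨si, ⟨i, rfl⟩, rfl⟩
      exact ⟨i, X_pow_eq_monomial⟩
  rw [hset, mem_ideal_span_monomial_image]
  constructor
  · intro h d hd
    obtain ⟨si, ⟨i, rfl⟩, hle⟩ := h d hd
    exact ⟨i, (Finsupp.single_le_iff).mp hle⟩
  · intro h d hd
    obtain ⟨i, hi⟩ := h d hd
    exact ⟨Finsupp.single i q, ⟨i, rfl⟩, Finsupp.single_le_iff.mpr hi⟩

/-- Every monomial of an element of `m^c` has total degree at least `c`. -/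
lemma deg_ge_of_mem_pow [CommSemiring k] :
    ∀ (c : ℕ) (f : MvPolynomial (Fin m) k),
      f ∈ (Ideal.span (Set.range (X : Fin m → MvPolynomial (Fin m) k))) ^ c →
      ∀ d ∈ f.support, c ≤ ∑ i, d i := by
  intro c
  induction c with
  | zero => intro f _ d _; exact Nat.zero_le _
  | succ c ih =>
    intro f hf
    rw [pow_succ] at hf
    refine Submodule.mul_induction_on hf ?_ ?_
    · intro x hx y hy d hd
      have hsub := MvPolynomial.support_mul x y hd
      rw [Finset.mem_add] at hsub
      obtain ⟨d1, hd1, d2, hd2, rfl⟩ := hsub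
      have h1 : c ≤ ∑ i, d1 i := ih x hx d1 hd1
      have h2 : 1 ≤ ∑ i, d2 i := by
        have : y ∈ Ideal.span (X '' (Set.univ : Set (Fin m)) :
            Set (MvPolynomial (Fin m) k)) := by
          rwa [Set.image_univ]
        obtain ⟨i, _, hi⟩ := (mem_ideal_span_X_image).mp this d2 hd2
        calc 1 ≤ d2 i := Nat.one_le_iff_ne_zero.mpr hi
          _ ≤ ∑ j, d2 j := Finset.single_le_sum (fun _ _ => Nat.zero_le _) (Finset.mem_univ i)
      have : ∀ i, (d1 + d2) i = d1 i + d2 i := fun i => rfl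
      simp only [this, Finset.sum_add_distrib]
      omega
    · intro x y hx hy d hd
      rcases Finset.mem_union.mp (MvPolynomial.support_add hd) with h | h
      · exact hx d h
      · exact hy d h

/-- Frobenius on coefficients: `coeff (p • d) (g ^ p) = (coeff d g) ^ p`. -/
lemma coeff_pow_char [Fact p.Prime] [Field k] [CharP k p]
    (g : MvPolynomial (Fin m) k) (d : Fin m →₀ ℕ) :
    coeff (p • d) (g ^ p) = (coeff d g) ^ p := by
  have hp : 0 < p := (Fact.out : p.Prime).pos
  conv_lhs => rw [g.as_sum]
  rw [sum_pow_char]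
  simp_rw [monomial_pow]
  rw [coeff_sum]
  simp_rw [coeff_monomial]
  have hinj : ∀ d' : Fin m →₀ ℕ, p • d' = p • d ↔ d' = d := by
    intro d'
    constructor
    · intro h
      ext i
      have := DFunLike.congr_fun h i
      simp only [Finsupp.smul_apply, smul_eq_mul] at this
      exact Nat.eq_of_mul_eq_mul_left hp this
    · rintro rfl; rfl
  by_cases hmem : d ∈ g.support
  · rw [Finset.sum_congr rfl (fun d' _ => by rw [if_congr (hinj d') rfl rfl]),
      Finset.sum_ite_eq' g.support d (fun d' => coeff d' g ^ p), if_pos hmem]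
  · rw [Finset.sum_eq_zero, MvPolynomial.notMem_support_iff.mp hmem,
      zero_pow hp.ne']
    intro d' hd'
    rw [if_neg]
    rw [hinj d']
    rintro rfl
    exact hmem hd'

end Aux

/-- For a nonzero ideal `a ⊆ m = (x_1,…,x_m)` in `k[x_1,…,x_m]` (char `p > 0`),
with `ν_a(p^e) = max{c : a^c ⊄ m^{[p^e]}}`: one has `ν_a(p^{e+1}) ≥ p·ν_a(p^e)`,
the sequence `ν_a(p^e)/p^e` is nondecreasing, and it converges to a limit
`fpt(a) ∈ [0, m·t]` whenever `a` is generated by `t` elements. -/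
theorem stmt11 (p : ℕ) [Fact p.Prime] (k : Type*) [Field k] [CharP k p]
    (m t : ℕ) (a : Ideal (MvPolynomial (Fin m) k)) (ha : a ≠ ⊥)
    (ham : a ≤ Ideal.span (Set.range (X : Fin m → MvPolynomial (Fin m) k)))
    (s : Finset (MvPolynomial (Fin m) k)) (hcard : s.card = t)
    (hgen : Ideal.span (s : Set (MvPolynomial (Fin m) k)) = a)
    (ν : ℕ → ℕ)
    (hν : ∀ e, IsGreatest
      {c : ℕ | ¬ a ^ c ≤ Ideal.span (Set.range fun i : Fin m => (X i : MvPolynomial (Fin m) k) ^ p ^ e)}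
      (ν e)) :
    (∀ e, p * ν e ≤ ν (e + 1)) ∧
    Monotone (fun e => (ν e : ℝ) / (p : ℝ) ^ e) ∧
    ∃ L ∈ Set.Icc (0 : ℝ) ((m : ℝ) * t),
      Filter.Tendsto (fun e => (ν e : ℝ) / (p : ℝ) ^ e) Filter.atTop (nhds L) := by
  have hp : 0 < p := (Fact.out : p.Prime).pos
  have hpR : (1 : ℝ) < (p : ℝ) := by exact_mod_cast (Fact.out : p.Prime).one_lt
  -- Part 1: p * ν e ≤ ν (e+1)
  have part1 : ∀ e, p * ν e ≤ ν (e + 1) := by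
    intro e
    refine (hν (e + 1)).2 ?_
    -- find g ∈ a ^ (ν e) with g ∉ m^{[p^e]}
    have h1 : ¬ a ^ (ν e) ≤ Ideal.span
        (Set.range fun i : Fin m => (X i : MvPolynomial (Fin m) k) ^ p ^ e) := (hν e).1
    rw [SetLike.not_le_iff_exists] at h1
    obtain ⟨g, hg, hgnot⟩ := h1
    intro hle
    have hmem : g ^ p ∈ a ^ (p * ν e) := by
      rw [mul_comm, pow_mul]
      exact Ideal.pow_mem_pow hg p
    refine absurd (hle hmem) ?_
    rw [memJ_iff]
    rw [memJ_iff] at hgnot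
    push_neg at hgnot ⊢
    obtain ⟨d, hd, hdlt⟩ := hgnot
    refine ⟨p • d, ?_, ?_⟩
    · rw [MvPolynomial.mem_support_iff, coeff_pow_char]
      exact pow_ne_zero _ (MvPolynomial.mem_support_iff.mp hd)
    · intro i
      have : (p • d) i = p * d i := rfl
      rw [this, pow_succ, mul_comm (p ^ e) p]
      exact (Nat.mul_lt_mul_left hp).mpr (hdlt i)
  -- m ≥ 1
  have hm : 1 ≤ m := by
    by_contra hm0
    have hm0 : m = 0 := by omega
    subst hm0
    apply ha
    refine le_bot_iff.mp (ham.trans ?_)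
    have : (Set.range (X : Fin 0 → MvPolynomial (Fin 0) k)) = ∅ := by
      simp [Set.range_eq_empty]
    rw [this, Ideal.span_empty]
  -- t ≥ 1
  have ht : 1 ≤ t := by
    by_contra ht0
    have ht0 : t = 0 := by omega
    subst ht0
    rw [Finset.card_eq_zero] at hcard
    subst hcard
    simp only [Finset.coe_empty, Ideal.span_empty] at hgen
    exact ha hgen.symm
  -- upper bound: ν e ≤ m * p ^ e
  have hub : ∀ e, ν e ≤ m * p ^ e := by
    intro e
    by_contra hcon
    push_neg at hcon
    apply (hν e).1
    have hle : a ^ (ν e) ≤ a ^ (m * p ^ e + 1) := Ideal.pow_le_pow_right (by omega)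
    refine hle.trans ?_
    have hle2 : a ^ (m * p ^ e + 1) ≤
        (Ideal.span (Set.range (X : Fin m → MvPolynomial (Fin m) k))) ^ (m * p ^ e + 1) :=
      Ideal.pow_right_mono ham _
    refine hle2.trans ?_
    intro f hf
    rw [memJ_iff]
    intro d hd
    have hdeg := deg_ge_of_mem_pow (m * p ^ e + 1) f hf d hd
    by_contra hno
    push_neg at hno
    have : ∑ i, d i ≤ m * (p ^ e - 1) := by
      calc ∑ i, d i ≤ ∑ _i : Fin m, (p ^ e - 1) :=
            Finset.sum_le_sum (fun i _ => by have := hno i; omega)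
        _ = m * (p ^ e - 1) := by simp [Finset.sum_const, mul_comm]
    have hq : 1 ≤ p ^ e := Nat.one_le_pow _ _ hp
    have hC : m * (p ^ e - 1) ≤ m * p ^ e := Nat.mul_le_mul_left _ (Nat.sub_le _ _)
    omega
  -- Part 2: monotone
  have hpe : ∀ e : ℕ, (0 : ℝ) < (p : ℝ) ^ e := fun e => pow_pos (by positivity) e
  have part2 : Monotone (fun e => (ν e : ℝ) / (p : ℝ) ^ e) := by
    apply monotone_nat_of_le_succ
    intro e
    rw [div_le_div_iff₀ (hpe e) (hpe (e + 1))]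
    have h1 : (p : ℝ) * (ν e : ℝ) ≤ (ν (e + 1) : ℝ) := by
      exact_mod_cast part1 e
    calc (ν e : ℝ) * (p : ℝ) ^ (e + 1) = ((p : ℝ) * (ν e : ℝ)) * (p : ℝ) ^ e := by ring
      _ ≤ (ν (e + 1) : ℝ) * (p : ℝ) ^ e := by
          exact mul_le_mul_of_nonneg_right h1 (hpe e).le
  refine ⟨part1, part2, ?_⟩
  -- Part 3: convergence
  have hbdd : ∀ e, (ν e : ℝ) / (p : ℝ) ^ e ≤ (m : ℝ) := by
    intro e
    rw [div_le_iff₀ (hpe e)]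
    have := hub e
    calc (ν e : ℝ) ≤ ((m * p ^ e : ℕ) : ℝ) := by exact_mod_cast this
      _ = (m : ℝ) * (p : ℝ) ^ e := by push_cast; ring
  have hbddAbove : BddAbove (Set.range fun e => (ν e : ℝ) / (p : ℝ) ^ e) := by
    refine ⟨(m : ℝ), ?_⟩
    rintro x ⟨e, rfl⟩
    exact hbdd e
  refine ⟨⨆ e, (ν e : ℝ) / (p : ℝ) ^ e, ⟨?_, ?_⟩, ?_⟩
  · refine le_trans ?_ (le_ciSup hbddAbove 0)
    positivity
  · refine ciSup_le fun e => (hbdd e).trans ?_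
    have : (1 : ℝ) ≤ (t : ℝ) := by exact_mod_cast ht
    nlinarith [Nat.cast_nonneg (α := ℝ) m]
  · exact tendsto_atTop_ciSup part2 hbddAbove
end

section
/- Let E be an m×N nonnegative integer matrix with no zero column, P = {γ ∈ ℝ_{≥0}^N : E·γ ⪯ 1_m} its splitting polytope, and suppose P has a unique coordinate-sum-maximizing point ρ. If γ ∈ ℝ_{≥0}^N satisfies |γ| = |⟨ρ⟩_e| and E·γ = E·⟨ρ⟩_e, then γ = ⟨ρ⟩_e, where ⟨ρ⟩_e denotes the componentwise e-th truncation of the p-expansion of ρ (for a fixed prime p and e ≥ 1). -/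
/-!
Since `⟨ρ⟩_e ⪯ ρ`, the vector `γ + (ρ - ⟨ρ⟩_e)` is nonnegative, has the same image under `E` as `ρ`
and the same coordinate sum as `ρ`; so it lies in the polytope and is a maximal point, hence equals
`ρ` by uniqueness, i.e. `γ = ⟨ρ⟩_e`.
-/

open Matrix

theorem eq_of_mulVec_eq_of_sum_eq_of_le_uniqueMax {ι κ : Type*} [Fintype ι]
    (A : Matrix κ ι ℝ) (b : κ → ℝ) {ρ τ γ : ι → ℝ} (hρ : A *ᵥ ρ ≤ b)
    (huniq : ∀ x, 0 ≤ x → A *ᵥ x ≤ b → ∑ j, x j = ∑ j, ρ j → x = ρ)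
    (hτ : τ ≤ ρ) (hγ : 0 ≤ γ) (hA : A *ᵥ γ = A *ᵥ τ) (hsum : ∑ j, γ j = ∑ j, τ j) :
    γ = τ := by
  have hshift : γ + (ρ - τ) = ρ := by
    refine huniq _ (add_nonneg hγ (sub_nonneg.mpr hτ)) ?_ ?_
    · simpa [mulVec_add, mulVec_sub, hA] using hρ
    · simp [Finset.sum_add_distrib, Finset.sum_sub_distrib, hsum]
  linear_combination hshift

theorem stmt13_general (p : ℕ) (m N : ℕ) (E : Matrix (Fin m) (Fin N) ℕ)
    (ρ : Fin N → ℝ)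
    (hρP : (∀ j, 0 ≤ ρ j) ∧ ∀ i, ∑ j, (E i j : ℝ) * ρ j ≤ 1)
    (huniq : ∀ γ : Fin N → ℝ, ((∀ j, 0 ≤ γ j) ∧ ∀ i, ∑ j, (E i j : ℝ) * γ j ≤ 1) →
      ∑ j, γ j = ∑ j, ρ j → γ = ρ)
    (d : Fin N → ℕ → ℕ)
    (hd : ∀ j, (∀ k, d j k ≤ p - 1) ∧
      HasSum (fun k => (d j k : ℝ) / (p : ℝ) ^ (k + 1)) (ρ j) ∧
      (ρ j = 0 ∨ ∀ M, ∃ k ≥ M, d j k ≠ 0))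
    (e : ℕ)
    (ρe : Fin N → ℝ)
    (hρe : ∀ j, ρe j = ∑ k ∈ Finset.range e, (d j k : ℝ) / (p : ℝ) ^ (k + 1))
    (γ : Fin N → ℝ) (hγ0 : ∀ j, 0 ≤ γ j)
    (hsum : ∑ j, γ j = ∑ j, ρe j)
    (hEeq : ∀ i, ∑ j, (E i j : ℝ) * γ j = ∑ j, (E i j : ℝ) * ρe j) :
    γ = ρe := by
  have htrunc : ρe ≤ ρ := fun j => by
    rw [hρe j]
    exact sum_le_hasSum _ (fun k _ => by positivity) (hd j).2.1
  exact eq_of_mulVec_eq_of_sum_eq_of_le_uniqueMax (E.map (↑)) 1 hρP.2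
    (fun x hx hEx => huniq x ⟨hx, hEx⟩) htrunc hγ0 (funext hEeq) hsum

/-- Let `E` be an `m × N` nonnegative integer matrix with no zero column whose
splitting polytope `P = {γ ∈ ℝ_{≥0}^N : E·γ ⪯ 1}` has a unique coordinate-sum
maximizing point `ρ`, with base-`p` digit data `d` and `e`-th truncation `ρe`
(`ρe j = ∑_{k<e} d j k / p^{k+1}`).  If `γ ⪰ 0` satisfies `|γ| = |⟨ρ⟩_e|` and
`E·γ = E·⟨ρ⟩_e`, then `γ = ⟨ρ⟩_e`. -/
theorem stmt13 (p : ℕ) (hp : p.Prime) (m N : ℕ) (E : Matrix (Fin m) (Fin N) ℕ)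
    (hE : ∀ j, ∃ i, E i j ≠ 0)
    (ρ : Fin N → ℝ)
    (hρP : (∀ j, 0 ≤ ρ j) ∧ ∀ i, ∑ j, (E i j : ℝ) * ρ j ≤ 1)
    (hmax : ∀ γ : Fin N → ℝ, ((∀ j, 0 ≤ γ j) ∧ ∀ i, ∑ j, (E i j : ℝ) * γ j ≤ 1) →
      ∑ j, γ j ≤ ∑ j, ρ j)
    (huniq : ∀ γ : Fin N → ℝ, ((∀ j, 0 ≤ γ j) ∧ ∀ i, ∑ j, (E i j : ℝ) * γ j ≤ 1) →
      ∑ j, γ j = ∑ j, ρ j → γ = ρ)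
    (d : Fin N → ℕ → ℕ)
    (hd : ∀ j, (∀ k, d j k ≤ p - 1) ∧
      HasSum (fun k => (d j k : ℝ) / (p : ℝ) ^ (k + 1)) (ρ j) ∧
      (ρ j = 0 ∨ ∀ M, ∃ k ≥ M, d j k ≠ 0))
    (e : ℕ) (he : 1 ≤ e)
    (ρe : Fin N → ℝ)
    (hρe : ∀ j, ρe j = ∑ k ∈ Finset.range e, (d j k : ℝ) / (p : ℝ) ^ (k + 1))
    (γ : Fin N → ℝ) (hγ0 : ∀ j, 0 ≤ γ j)
    (hsum : ∑ j, γ j = ∑ j, ρe j)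
    (hEeq : ∀ i, ∑ j, (E i j : ℝ) * γ j = ∑ j, (E i j : ℝ) * ρe j) :
    γ = ρe :=
  stmt13_general p m N E ρ hρP huniq d hd e ρe hρe γ hγ0 hsum hEeq
end

section
/- With the hypotheses of the previous statement (E an m×N nonnegative integer matrix with splitting polytope P having unique maximal point ρ, p prime, e ≥ 1): if φ, ψ ∈ ℝ_{≥0}^N satisfy ψ ⪯ ⟨ρ⟩_e, |φ| = |ψ|, and E·φ = E·ψ, then φ = ψ. -/
/-- With `E` an `m × N` nonnegative integer matrix (no zero column) whose splitting
polytope has unique coordinate-sum maximizer `ρ`, `p` prime, `e ≥ 1`, and `⟨ρ⟩_e`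
the componentwise `e`-th truncation of the base-`p` expansion of `ρ`:
if `φ, ψ ⪰ 0` satisfy `ψ ⪯ ⟨ρ⟩_e`, `|φ| = |ψ|` and `E·φ = E·ψ`, then `φ = ψ`. -/
theorem stmt14 (p : ℕ) (hp : p.Prime) (m N : ℕ) (E : Matrix (Fin m) (Fin N) ℕ)
    (hE : ∀ j, ∃ i, E i j ≠ 0)
    (ρ : Fin N → ℝ)
    (hρP : (∀ j, 0 ≤ ρ j) ∧ ∀ i, ∑ j, (E i j : ℝ) * ρ j ≤ 1)
    (hmax : ∀ γ : Fin N → ℝ, ((∀ j, 0 ≤ γ j) ∧ ∀ i, ∑ j, (E i j : ℝ) * γ j ≤ 1) →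
      ∑ j, γ j ≤ ∑ j, ρ j)
    (huniq : ∀ γ : Fin N → ℝ, ((∀ j, 0 ≤ γ j) ∧ ∀ i, ∑ j, (E i j : ℝ) * γ j ≤ 1) →
      ∑ j, γ j = ∑ j, ρ j → γ = ρ)
    (d : Fin N → ℕ → ℕ)
    (hd : ∀ j, (∀ k, d j k ≤ p - 1) ∧
      HasSum (fun k => (d j k : ℝ) / (p : ℝ) ^ (k + 1)) (ρ j) ∧
      (ρ j = 0 ∨ ∀ M, ∃ k ≥ M, d j k ≠ 0))
    (e : ℕ) (he : 1 ≤ e)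
    (ρe : Fin N → ℝ)
    (hρe : ∀ j, ρe j = ∑ k ∈ Finset.range e, (d j k : ℝ) / (p : ℝ) ^ (k + 1))
    (φ ψ : Fin N → ℝ) (hφ0 : ∀ j, 0 ≤ φ j) (hψ0 : ∀ j, 0 ≤ ψ j)
    (hψρe : ∀ j, ψ j ≤ ρe j)
    (hsum : ∑ j, φ j = ∑ j, ψ j)
    (hEeq : ∀ i, ∑ j, (E i j : ℝ) * φ j = ∑ j, (E i j : ℝ) * ψ j) :
    φ = ψ := by
  have hρeρ : ∀ j, ρe j ≤ ρ j := fun j => by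
    rw [hρe j]
    exact sum_le_hasSum (Finset.range e) (fun k _ => by positivity) (hd j).2.1
  have hψρ : ∀ j, ψ j ≤ ρ j := fun j => (hψρe j).trans (hρeρ j)
  set β : Fin N → ℝ := fun j => φ j + ρ j - ψ j with hβ
  have h1 : ∀ j, 0 ≤ β j := fun j => by
    have := hφ0 j; have := hψρ j; simp only [hβ]; linarith
  have h2 : ∀ i, ∑ j, (E i j : ℝ) * β j ≤ 1 := fun i => by
    have : ∑ j, (E i j : ℝ) * β j = ∑ j, (E i j : ℝ) * ρ j := by
      simp only [hβ, mul_sub, mul_add, Finset.sum_sub_distrib, Finset.sum_add_distrib,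
        hEeq i]
      ring
    rw [this]; exact hρP.2 i
  have h3 : ∑ j, β j = ∑ j, ρ j := by
    simp only [hβ, Finset.sum_sub_distrib, Finset.sum_add_distrib, hsum]
    ring
  have := huniq β ⟨h1, h2⟩ h3
  funext j
  have := congrFun this j
  simp only [hβ] at this
  linarith
end

section
/- Let p be a prime and R = F_p[x,y,z] with maximal ideal m = (x,y,z), and let a = (x² + xy², yz³). If p ≡ 1 (mod 6), then fpt(a) = 1. -/
open MvPolynomial

section AuxRing

variable {R : Type*} [CommRing R]

lemma span_pair_pow_le (f g : R) (n : ℕ) :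
    Ideal.span {f, g} ^ n ≤ Ideal.span {x | ∃ i ≤ n, x = f ^ i * g ^ (n - i)} := by
  induction n with
  | zero =>
      rw [pow_zero, Ideal.one_eq_top]
      exact top_le_iff.mpr ((Ideal.eq_top_iff_one _).mpr
        (Ideal.subset_span ⟨0, le_rfl, by simp⟩))
  | succ n ih =>
      rw [pow_succ]
      refine Ideal.mul_le.mpr fun r hr s hs => ?_
      have hr' : r ∈ Ideal.span {x | ∃ i ≤ n, x = f ^ i * g ^ (n - i)} := ih hr
      clear hr
      induction hs using Submodule.span_induction with
      | mem y hy =>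
          induction hr' using Submodule.span_induction with
          | mem x hx =>
              obtain ⟨i, hi, rfl⟩ := hx
              rcases hy with rfl | rfl
              · exact Ideal.subset_span
                  ⟨i + 1, by omega, by rw [show n + 1 - (i + 1) = n - i by omega]; ring⟩
              · exact Ideal.subset_span
                  ⟨i, by omega, by rw [show n + 1 - i = (n - i) + 1 by omega]; ring⟩
          | zero => simpa using zero_mem _
          | add x z hx hz ihx ihz => simpa [add_mul] using add_mem ihx ihz
          | smul c x hx ihx => have := Submodule.smul_mem _ c ihx; simpa [smul_eq_mul, mul_assoc] using this
      | zero => simpa using zero_mem _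
      | add y z hy hz ihy ihz => simpa [mul_add] using add_mem ihy ihz
      | smul c y hy ihy => have := Submodule.smul_mem _ c ihy; simpa [smul_eq_mul, mul_left_comm] using this

end AuxRing

section AuxMv

variable (p : ℕ)

local notation "R3" => MvPolynomial (Fin 3) (ZMod p)

lemma Xpow_mem (q : ℕ) (i : Fin 3) {a : ℕ} (h : q ≤ a) :
    (X i : R3) ^ a ∈ Ideal.span (Set.range fun i : Fin 3 => (X i : R3) ^ q) := by
  rw [show a = (a - q) + q by omega, pow_add]
  exact Ideal.mul_mem_left _ _ (Ideal.subset_span ⟨i, rfl⟩)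

lemma term_mem (q a b c : ℕ) (r : ZMod p) (h : q ≤ a ∨ q ≤ b ∨ q ≤ c) :
    (C r * X 0 ^ a * X 1 ^ b * X 2 ^ c : R3) ∈
      Ideal.span (Set.range fun i : Fin 3 => (X i : R3) ^ q) := by
  rcases h with h | h | h
  · rw [show (C r * X 0 ^ a * X 1 ^ b * X 2 ^ c : R3)
        = (C r * X 1 ^ b * X 2 ^ c) * X 0 ^ a by ring]
    exact Ideal.mul_mem_left _ _ (Xpow_mem p q 0 h)
  · rw [show (C r * X 0 ^ a * X 1 ^ b * X 2 ^ c : R3)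
        = (C r * X 0 ^ a * X 2 ^ c) * X 1 ^ b by ring]
    exact Ideal.mul_mem_left _ _ (Xpow_mem p q 1 h)
  · rw [show (C r * X 0 ^ a * X 1 ^ b * X 2 ^ c : R3)
        = (C r * X 0 ^ a * X 1 ^ b) * X 2 ^ c by ring]
    exact Ideal.mul_mem_left _ _ (Xpow_mem p q 2 h)

lemma expand_fg (i j : ℕ) :
    ((X 0 ^ 2 + X 0 * X 1 ^ 2 : R3) ^ i) * (X 1 * X 2 ^ 3) ^ j
    = ∑ t ∈ Finset.range (i + 1),
        C ((i.choose t : ZMod p)) * X 0 ^ (i + t) * X 1 ^ (2 * (i - t) + j) * X 2 ^ (3 * j) := by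
  rw [show (X 0 ^ 2 + X 0 * X 1 ^ 2 : R3) = X 0 * (X 0 + X 1 ^ 2) by ring,
    mul_pow, add_pow, Finset.mul_sum, Finset.sum_mul]
  refine Finset.sum_congr rfl fun t ht => ?_
  rw [Finset.mem_range] at ht
  rw [map_natCast (C : ZMod p →+* R3), mul_pow, pow_add, pow_add, pow_mul, pow_mul]
  ring

end AuxMv

lemma choose_key (p : ℕ) [Fact p.Prime] (hp3 : p % 3 = 1) (e : ℕ) :
    ∃ k, 3 * k + 1 = p ^ e ∧ ((2 * k).choose k : ZMod p) ≠ 0 := by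
  have hp : p.Prime := Fact.out
  induction e with
  | zero => exact ⟨0, by norm_num, by norm_num⟩
  | succ e ih =>
      obtain ⟨k, hk, hne⟩ := ih
      set m := p / 3 with hm
      have hpm : p = 3 * m + 1 := by omega
      refine ⟨p * k + m, ?_, ?_⟩
      · have h1 : 3 * (p * k + m) + 1 = p * (3 * k + 1) := by rw [hpm]; ring
        rw [h1, hk, ← pow_succ']
      · have key := Choose.choose_modEq_choose_mod_mul_choose_div
          (p := p) (n := 2 * (p * k + m)) (k := p * k + m)
        have hmod1 : (2 * (p * k + m)) % p = 2 * m := by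
          rw [show 2 * (p * k + m) = p * (2 * k) + 2 * m by ring, Nat.mul_add_mod]
          exact Nat.mod_eq_of_lt (by omega)
        have hdiv1 : (2 * (p * k + m)) / p = 2 * k := by
          rw [show 2 * (p * k + m) = p * (2 * k) + 2 * m by ring,
            Nat.mul_add_div hp.pos, Nat.div_eq_of_lt (by omega), add_zero]
        have hmod2 : (p * k + m) % p = m := by
          rw [Nat.mul_add_mod]; exact Nat.mod_eq_of_lt (by omega)
        have hdiv2 : (p * k + m) / p = k := by
          rw [Nat.mul_add_div hp.pos, Nat.div_eq_of_lt (by omega), add_zero]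
        rw [hmod1, hdiv1, hmod2, hdiv2] at key
        have key2 : (((2 * (p * k + m)).choose (p * k + m) : ℤ) : ZMod p)
            = (((2 * m).choose m * (2 * k).choose k : ℤ) : ZMod p) :=
          (ZMod.intCast_eq_intCast_iff _ _ _).mpr key
        push_cast at key2
        rw [key2]
        refine mul_ne_zero ?_ hne
        intro h0
        rw [ZMod.natCast_eq_zero_iff] at h0
        have hd : p ∣ (2 * m).factorial := by
          have := Nat.choose_mul_factorial_mul_factorial (show m ≤ 2 * m by omega)
          exact this ▸ (h0.mul_right _).mul_right _
        have := (Nat.Prime.dvd_factorial hp).mp hd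
        omega

lemma coeff_diag (p q k : ℕ) (_hk : 3 * k + 1 = q) :
    MvPolynomial.coeff
      (Finsupp.single 0 (3 * k) + Finsupp.single 1 (3 * k) + Finsupp.single 2 (3 * k))
      (((X 0 ^ 2 + X 0 * X 1 ^ 2 : MvPolynomial (Fin 3) (ZMod p)) ^ (2 * k))
        * (X 1 * X 2 ^ 3) ^ k)
    = (((2 * k).choose k : ZMod p)) := by
  have hterm : ∀ (a b c : ℕ) (r : ZMod p),
      (C r * X 0 ^ a * X 1 ^ b * X 2 ^ c : MvPolynomial (Fin 3) (ZMod p))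
      = monomial (Finsupp.single 0 a + Finsupp.single 1 b + Finsupp.single 2 c) r := by
    intro a b c r
    rw [C_apply, X_pow_eq_monomial, X_pow_eq_monomial, X_pow_eq_monomial,
      monomial_mul, monomial_mul, monomial_mul, zero_add, mul_one, mul_one, mul_one]
  rw [expand_fg p (2 * k) k]
  simp_rw [hterm, MvPolynomial.coeff_sum, coeff_monomial]
  rw [Finset.sum_eq_single_of_mem k (by rw [Finset.mem_range]; omega)]
  · rw [show 2 * k + k = 3 * k from by omega, show 2 * (2 * k - k) + k = 3 * k from by omega,
      if_pos rfl]
  · intro t ht hne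
    rw [if_neg]
    intro hEq
    have h0 := DFunLike.congr_fun hEq (0 : Fin 3)
    simp [Finsupp.single_apply] at h0
    omega

lemma not_le_lower (p q k : ℕ) (hk : 3 * k + 1 = q)
    (hch : (((2 * k).choose k : ZMod p)) ≠ 0) :
    ¬ (Ideal.span {(X 0) ^ 2 + X 0 * (X 1) ^ 2, X 1 * (X 2) ^ 3} :
        Ideal (MvPolynomial (Fin 3) (ZMod p))) ^ (3 * k) ≤
      Ideal.span (Set.range fun i : Fin 3 =>
        (X i : MvPolynomial (Fin 3) (ZMod p)) ^ q) := by
  intro hle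
  set f : MvPolynomial (Fin 3) (ZMod p) := (X 0) ^ 2 + X 0 * (X 1) ^ 2 with hf
  set g : MvPolynomial (Fin 3) (ZMod p) := X 1 * (X 2) ^ 3 with hg
  have hfA : f ∈ Ideal.span {f, g} := Ideal.subset_span (by simp)
  have hgA : g ∈ Ideal.span {f, g} := Ideal.subset_span (by simp)
  have hw : f ^ (2 * k) * g ^ k ∈ Ideal.span {f, g} ^ (3 * k) := by
    have := Ideal.mul_mem_mul (Ideal.pow_mem_pow hfA (2 * k)) (Ideal.pow_mem_pow hgA k)
    rwa [← pow_add, show 2 * k + k = 3 * k by omega] at this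
  have hwM := hle hw
  -- rewrite the ideal as a span of monomials
  have hMeq : (Set.range fun i : Fin 3 => (X i : MvPolynomial (Fin 3) (ZMod p)) ^ q)
      = (fun s => monomial s (1 : ZMod p)) ''
          Set.range (fun i : Fin 3 => Finsupp.single i q) := by
    have h1 : (fun i : Fin 3 => (X i : MvPolynomial (Fin 3) (ZMod p)) ^ q)
        = ((fun s => monomial s (1 : ZMod p)) ∘ fun i : Fin 3 => Finsupp.single i q) :=
      funext fun i => X_pow_eq_monomial
    rw [h1, Set.range_comp]
  rw [hMeq] at hwM
  have hsup : (Finsupp.single 0 (3 * k) + Finsupp.single 1 (3 * k)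
      + Finsupp.single 2 (3 * k) : Fin 3 →₀ ℕ) ∈ (f ^ (2 * k) * g ^ k).support := by
    rw [mem_support_iff, hf, hg, coeff_diag p q k hk]
    exact hch
  obtain ⟨s, ⟨i, rfl⟩, hle'⟩ := mem_ideal_span_monomial_image.mp hwM _ hsup
  have hq : q ≤ (Finsupp.single 0 (3 * k) + Finsupp.single 1 (3 * k)
      + Finsupp.single 2 (3 * k) : Fin 3 →₀ ℕ) i := Finsupp.single_le_iff.mp hle'
  have : (Finsupp.single 0 (3 * k) + Finsupp.single 1 (3 * k)
      + Finsupp.single 2 (3 * k) : Fin 3 →₀ ℕ) i ≤ 3 * k := by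
    fin_cases i <;> simp [Finsupp.single_apply]
  omega

lemma upper_le (p q : ℕ) :
    (Ideal.span {(X 0) ^ 2 + X 0 * (X 1) ^ 2, X 1 * (X 2) ^ 3} :
        Ideal (MvPolynomial (Fin 3) (ZMod p))) ^ q ≤
      Ideal.span (Set.range fun i : Fin 3 =>
        (X i : MvPolynomial (Fin 3) (ZMod p)) ^ q) := by
  refine le_trans (span_pair_pow_le _ _ q) (Ideal.span_le.mpr ?_)
  rintro x ⟨i, hi, rfl⟩
  rw [SetLike.mem_coe, expand_fg p i (q - i)]
  refine Ideal.sum_mem _ fun t ht => ?_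
  rw [Finset.mem_range] at ht
  exact term_mem p q _ _ _ _ (by omega)

/-- In `F_p[x,y,z]` with `p ≡ 1 (mod 6)`, the ideal `a = (x² + xy², yz³)` has
`fpt(a) = 1`, where `fpt(a) = lim_e ν_a(p^e)/p^e` and
`ν_a(p^e) = max{c : a^c ⊄ (x^{p^e}, y^{p^e}, z^{p^e})}`. -/
theorem stmt15 (p : ℕ) [Fact p.Prime] (hp6 : p % 6 = 1)
    (ν : ℕ → ℕ)
    (hν : ∀ e, IsGreatest
      {c : ℕ | ¬ (Ideal.span {(X 0) ^ 2 + X 0 * (X 1) ^ 2, X 1 * (X 2) ^ 3} :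
          Ideal (MvPolynomial (Fin 3) (ZMod p))) ^ c ≤
        Ideal.span (Set.range fun i : Fin 3 => (X i : MvPolynomial (Fin 3) (ZMod p)) ^ p ^ e)}
      (ν e))
    (L : ℝ)
    (hL : Filter.Tendsto (fun e => (ν e : ℝ) / (p : ℝ) ^ e) Filter.atTop (nhds L)) :
    L = 1 := by
  have hp : p.Prime := Fact.out
  have hkey : ∀ e, ν e = p ^ e - 1 := by
    intro e
    obtain ⟨hmem, hub⟩ := hν e
    obtain ⟨k, hk, hch⟩ := choose_key p (by omega) e
    have hlow : p ^ e - 1 ≤ ν e := by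
      refine hub ?_
      show ¬ _
      rw [show p ^ e - 1 = 3 * k by omega]
      exact not_le_lower p (p ^ e) k hk hch
    have hhigh : ν e ≤ p ^ e - 1 := by
      by_contra hgt
      push_neg at hgt
      exact hmem (le_trans (Ideal.pow_le_pow_right (by omega)) (upper_le p (p ^ e)))
    omega
  have hlim : Filter.Tendsto (fun e => (ν e : ℝ) / (p : ℝ) ^ e) Filter.atTop (nhds 1) := by
    have hfun : ∀ e : ℕ, (ν e : ℝ) / (p : ℝ) ^ e = 1 - (1 / (p : ℝ)) ^ e := by
      intro e
      rw [hkey e]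
      have h1 : (1 : ℕ) ≤ p ^ e := Nat.one_le_pow _ _ (by have := hp.two_le; omega)
      have hppos : (0 : ℝ) < (p : ℝ) ^ e := by
        have : (0 : ℝ) < (p : ℝ) := by exact_mod_cast hp.pos
        positivity
      rw [Nat.cast_sub h1]
      push_cast
      rw [div_pow, one_pow]
      field_simp
    have h2 : Filter.Tendsto (fun e : ℕ => 1 - (1 / (p : ℝ)) ^ e) Filter.atTop (nhds (1 - 0)) := by
      refine Filter.Tendsto.sub tendsto_const_nhds ?_
      refine tendsto_pow_atTop_nhds_zero_of_lt_one (by positivity) ?_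
      rw [div_lt_one (by exact_mod_cast hp.pos)]
      exact_mod_cast hp.one_lt
    rw [sub_zero] at h2
    exact h2.congr fun e => (hfun e).symm
  exact tendsto_nhds_unique hL hlim
end

section
/- Let p = 2 and R = F_2[x,y,z] with maximal ideal m, and let a = (x² + xy², yz³). Then fpt(a) ≥ 5/6. -/
open MvPolynomial

namespace Stmt16Aux

noncomputable def f1 : MvPolynomial (Fin 3) (ZMod 2) := X 0 ^ 2 + X 0 * X 1 ^ 2
noncomputable def f2 : MvPolynomial (Fin 3) (ZMod 2) := X 1 * X 2 ^ 3

lemma f1_pow (i : ℕ) : ∃ q : MvPolynomial (Fin 3) (ZMod 2),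
    f1 ^ i = X 0 ^ (2 * i) + X 1 ^ 2 * q := by
  induction i with
  | zero => exact ⟨0, by simp⟩
  | succ n ih =>
    obtain ⟨q, hq⟩ := ih
    refine ⟨X 0 ^ 2 * q + X 0 ^ (2 * n) * X 0 + X 0 * X 1 ^ 2 * q, ?_⟩
    rw [pow_succ, hq, f1]
    ring

lemma coeff_key (i l : ℕ) :
    coeff (Finsupp.single 0 (2 * i) + (Finsupp.single 1 l + Finsupp.single 2 (3 * l)))
      (f1 ^ i * f2 ^ l) = 1 := by
  obtain ⟨q, hq⟩ := f1_pow i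
  have hf2 : f2 ^ l = monomial (Finsupp.single 1 l + Finsupp.single 2 (3 * l)) 1 := by
    rw [f2, mul_pow, ← pow_mul, X_pow_eq_monomial, X_pow_eq_monomial, monomial_mul, one_mul]
  rw [hq, add_mul, hf2, X_pow_eq_monomial, monomial_mul, one_mul, coeff_add,
    coeff_monomial, if_pos rfl]
  have h2 : X 1 ^ 2 * q * monomial (Finsupp.single 1 l + Finsupp.single 2 (3 * l))
      (1 : ZMod 2) = monomial (Finsupp.single 1 2 + (Finsupp.single 1 l +
        Finsupp.single 2 (3 * l))) 1 * q := by
    rw [X_pow_eq_monomial, mul_right_comm, monomial_mul, mul_one]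
  rw [h2, coeff_monomial_mul', if_neg, add_zero]
  intro hle
  have := hle 1
  simp [Finsupp.single_apply] at this

lemma not_mem (e i l : ℕ) (hi : 2 * i < 2 ^ e) (hl : l < 2 ^ e) (hl3 : 3 * l < 2 ^ e) :
    f1 ^ i * f2 ^ l ∉ Ideal.span (Set.range fun j : Fin 3 =>
      (X j : MvPolynomial (Fin 3) (ZMod 2)) ^ 2 ^ e) := by
  have hrange : (Set.range fun j : Fin 3 => (X j : MvPolynomial (Fin 3) (ZMod 2)) ^ 2 ^ e)
      = (fun s => monomial s (1 : ZMod 2)) '' (Set.range fun j : Fin 3 =>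
          Finsupp.single j (2 ^ e)) := by
    rw [← Set.range_comp]
    refine congrArg _ (funext fun j => ?_)
    simp [Function.comp, X_pow_eq_monomial]
  rw [hrange, mem_ideal_span_monomial_image]
  push_neg
  refine ⟨Finsupp.single 0 (2 * i) + (Finsupp.single 1 l + Finsupp.single 2 (3 * l)), ?_, ?_⟩
  · rw [MvPolynomial.mem_support_iff, coeff_key]; exact one_ne_zero
  · rintro si ⟨j, rfl⟩ hle
    rw [Finsupp.single_le_iff] at hle
    fin_cases j <;> simp [Finsupp.single_apply] at hle <;> omega

lemma nu_lb (ν : ℕ → ℕ)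
    (hν : ∀ e, IsGreatest
      {c : ℕ | ¬ (Ideal.span {(X 0) ^ 2 + X 0 * (X 1) ^ 2, X 1 * (X 2) ^ 3} :
          Ideal (MvPolynomial (Fin 3) (ZMod 2))) ^ c ≤
        Ideal.span (Set.range fun i : Fin 3 => (X i : MvPolynomial (Fin 3) (ZMod 2)) ^ 2 ^ e)}
      (ν e)) (e : ℕ) (he : 1 ≤ e) :
    2 ^ (e - 1) - 1 + (2 ^ e - 1) / 3 ≤ ν e := by
  set i := 2 ^ (e - 1) - 1 with hi
  set l := (2 ^ e - 1) / 3 with hl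
  have hpow : 2 ^ e = 2 * 2 ^ (e - 1) := by
    cases e with
    | zero => omega
    | succ n => rw [pow_succ, Nat.succ_sub_one]; ring
  have h1 : (1 : ℕ) ≤ 2 ^ (e - 1) := Nat.one_le_two_pow
  have hi2 : 2 * i < 2 ^ e := by omega
  have hl2 : 3 * l < 2 ^ e := by
    have := Nat.mul_div_le (2 ^ e - 1) 3
    omega
  have hl1 : l < 2 ^ e := by omega
  refine (hν e).2 ?_
  intro hle
  refine not_mem e i l hi2 hl1 hl2 (hle ?_)
  have hf1 : f1 ∈ (Ideal.span {(X 0) ^ 2 + X 0 * (X 1) ^ 2, X 1 * (X 2) ^ 3} :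
      Ideal (MvPolynomial (Fin 3) (ZMod 2))) :=
    Ideal.subset_span (Set.mem_insert _ _)
  have hf2 : f2 ∈ (Ideal.span {(X 0) ^ 2 + X 0 * (X 1) ^ 2, X 1 * (X 2) ^ 3} :
      Ideal (MvPolynomial (Fin 3) (ZMod 2))) :=
    Ideal.subset_span (Set.mem_insert_of_mem _ rfl)
  rw [pow_add]
  exact Ideal.mul_mem_mul (Ideal.pow_mem_pow hf1 i) (Ideal.pow_mem_pow hf2 l)

end Stmt16Aux

/-- In `F_2[x,y,z]`, the ideal `a = (x² + xy², yz³)` has `fpt(a) ≥ 5/6`, where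
`fpt(a) = lim_e ν_a(2^e)/2^e` and `ν_a(2^e) = max{c : a^c ⊄ (x^{2^e}, y^{2^e}, z^{2^e})}`. -/
theorem stmt16
    (ν : ℕ → ℕ)
    (hν : ∀ e, IsGreatest
      {c : ℕ | ¬ (Ideal.span {(X 0) ^ 2 + X 0 * (X 1) ^ 2, X 1 * (X 2) ^ 3} :
          Ideal (MvPolynomial (Fin 3) (ZMod 2))) ^ c ≤
        Ideal.span (Set.range fun i : Fin 3 => (X i : MvPolynomial (Fin 3) (ZMod 2)) ^ 2 ^ e)}
      (ν e))
    (L : ℝ)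
    (hL : Filter.Tendsto (fun e => (ν e : ℝ) / (2 : ℝ) ^ e) Filter.atTop (nhds L)) :
    5 / 6 ≤ L := by
  have hkey : ∀ e, 5 * 2 ^ e ≤ 6 * ν e + 12 := by
    intro e
    rcases Nat.eq_zero_or_pos e with rfl | he
    · simp
    · have h := Stmt16Aux.nu_lb ν hν e he
      have hpow : 2 ^ e = 2 * 2 ^ (e - 1) := by
        cases e with
        | zero => omega
        | succ n => rw [pow_succ, Nat.succ_sub_one]; ring
      have h1 : (1 : ℕ) ≤ 2 ^ (e - 1) := Nat.one_le_two_pow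
      omega
  have hg : Filter.Tendsto (fun e : ℕ => 5 / 6 - 2 * (1 / 2 : ℝ) ^ e) Filter.atTop
      (nhds (5 / 6)) := by
    have h0 : Filter.Tendsto (fun e : ℕ => (1 / 2 : ℝ) ^ e) Filter.atTop (nhds 0) :=
      tendsto_pow_atTop_nhds_zero_of_lt_one (by norm_num) (by norm_num)
    have := (tendsto_const_nhds (x := (5 / 6 : ℝ)) (f := Filter.atTop)).sub
      (h0.const_mul 2)
    simpa using this
  refine le_of_tendsto_of_tendsto' hg hL fun e => ?_
  have h2 : (0 : ℝ) < 2 ^ e := by positivity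
  have hc : (5 * 2 ^ e : ℝ) ≤ 6 * ν e + 12 := by exact_mod_cast hkey e
  rw [le_div_iff₀ h2]
  have hp : (1 / 2 : ℝ) ^ e * 2 ^ e = 1 := by
    rw [div_pow, one_pow, div_mul_cancel₀]
    exact ne_of_gt h2
  have heq : (5 / 6 - 2 * (1 / 2 : ℝ) ^ e) * 2 ^ e = 5 / 6 * 2 ^ e - 2 := by
    linear_combination (-2 : ℝ) * hp
  linarith
end

section
/- Let R = F_2[x,y] with maximal ideal m = (x,y), and consider the ideals a_1 = (x), a_2 = (x + y²). For e ≥ 0 let V(2^e) = {(n_1,n_2) ∈ ℤ_{≥0}² : x^{n_1}(x+y²)^{n_2} ∉ (x^{2^e}, y^{2^e})}. Then lim_{e→∞} Card(V(2^e))/4^e = 3/4. -/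
/-!
Write `F = x + y²` and `q = 2p` with `p = 2^e`. In characteristic `2`, `F^p = x^p + y^{2p}`, so
`x^p F^p` and `F^{2p}` lie in `(x^q, y^q)`, and so does every `x^a F^b` with `a ≥ q`, `b ≥ q` or
`a, b ≥ p`. Conversely `x^a F^b` has coefficient `1` at `x^a y^{2b}`, which no element of
`(x^q, y^q)` has once `a, 2b < q`; and for `a < p ≤ b < q` the same holds for
`x^a F^b ≡ x^{a+p} F^{b-p}`. Hence `V(q)` is `[0,q) × [0,p)` together with `[0,p) × [p,q)`,
of size `3p² = (3/4) q²`.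
-/

open MvPolynomial

namespace FVolume

variable {R : Type*}

/-- The Frobenius power `m^[q] = (x^q, y^q)` of `m = (x, y)`. -/
noncomputable def bracketPow (R : Type*) [CommSemiring R] (q : ℕ) :
    Ideal (MvPolynomial (Fin 2) R) :=
  Ideal.span {X 0 ^ q, X 1 ^ q}

lemma pow_mul_pow_mem_of_le {S : Type*} [CommSemiring S] {I : Ideal S} {x y : S}
    {a₀ b₀ a b : ℕ} (h : x ^ a₀ * y ^ b₀ ∈ I) (ha : a₀ ≤ a) (hb : b₀ ≤ b) :
    x ^ a * y ^ b ∈ I :=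
  I.mem_of_dvd (mul_dvd_mul (pow_dvd_pow x ha) (pow_dvd_pow y hb)) h

section CommSemiring

variable [CommSemiring R]

lemma X_zero_pow_mem_bracketPow (q : ℕ) : (X 0 : MvPolynomial (Fin 2) R) ^ q ∈ bracketPow R q :=
  Ideal.subset_span (by simp)

lemma X_one_pow_mem_bracketPow (q : ℕ) : (X 1 : MvPolynomial (Fin 2) R) ^ q ∈ bracketPow R q :=
  Ideal.subset_span (by simp)

lemma coeff_eq_zero_of_mem_bracketPow {q : ℕ} {f : MvPolynomial (Fin 2) R}
    (hf : f ∈ bracketPow R q) {m : Fin 2 →₀ ℕ} (h0 : m 0 < q) (h1 : m 1 < q) :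
    coeff m f = 0 := by
  obtain ⟨a, b, rfl⟩ := Ideal.mem_span_pair.mp hf
  have not_le (i : Fin 2) (hi : m i < q) : ¬Finsupp.single i q ≤ m := fun h =>
    (Finsupp.single_le_iff.mp h).not_gt hi
  rw [coeff_add, X_pow_eq_monomial, X_pow_eq_monomial, coeff_mul_monomial', coeff_mul_monomial',
    if_neg (not_le 0 h0), if_neg (not_le 1 h1), add_zero]

lemma coeff_single_one_X_zero_add_X_one_sq_pow (b : ℕ) :
    coeff (Finsupp.single 1 (2 * b)) (((X 0 : MvPolynomial (Fin 2) R) + X 1 ^ 2) ^ b) = 1 := by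
  induction b with
  | zero => simp
  | succ b ih =>
    have hX1 (k : ℕ) : Finsupp.single (1 : Fin 2) (k + 1) - Finsupp.single 1 1 =
        Finsupp.single 1 k := by
      rw [← Finsupp.single_tsub, Nat.add_sub_cancel]
    have hsq (g : MvPolynomial (Fin 2) R) : g * X 1 ^ 2 = g * X 1 * X 1 := by ring
    rw [show 2 * (b + 1) = 2 * b + 1 + 1 by ring, pow_succ, mul_add, coeff_add, coeff_mul_X',
      if_neg (by simp), zero_add, hsq, coeff_mul_X', if_pos (by simp), hX1,
      coeff_mul_X', if_pos (by simp), hX1, ih]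

lemma coeff_X_zero_pow_mul_X_zero_add_X_one_sq_pow (a b : ℕ) :
    coeff (Finsupp.single 0 a + Finsupp.single 1 (2 * b))
      ((X 0 : MvPolynomial (Fin 2) R) ^ a * (X 0 + X 1 ^ 2) ^ b) = 1 := by
  rw [X_pow_eq_monomial, coeff_monomial_mul', if_pos (Finsupp.single_le_iff.mpr (by simp)),
    add_tsub_cancel_left, coeff_single_one_X_zero_add_X_one_sq_pow, mul_one]

lemma X_zero_pow_mul_X_zero_add_X_one_sq_pow_notMem [Nontrivial R] {q a b : ℕ}
    (ha : a < q) (hb : 2 * b < q) :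
    (X 0 : MvPolynomial (Fin 2) R) ^ a * (X 0 + X 1 ^ 2) ^ b ∉ bracketPow R q := fun hmem =>
  one_ne_zero <| (coeff_X_zero_pow_mul_X_zero_add_X_one_sq_pow (R := R) a b).symm.trans <|
    coeff_eq_zero_of_mem_bracketPow hmem (by simpa using ha) (by simpa using hb)

end CommSemiring

section CharTwo

variable [CommRing R] [CharP R 2]

lemma X_zero_add_X_one_sq_pow_two_pow (e : ℕ) :
    ((X 0 : MvPolynomial (Fin 2) R) + X 1 ^ 2) ^ 2 ^ e = X 0 ^ 2 ^ e + X 1 ^ (2 * 2 ^ e) := by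
  have : Fact (Nat.Prime 2) := ⟨Nat.prime_two⟩
  rw [add_pow_char_pow, ← pow_mul]

lemma X_zero_pow_mul_X_zero_add_X_one_sq_pow_mem {e a b : ℕ}
    (h : 2 * 2 ^ e ≤ a ∨ 2 * 2 ^ e ≤ b ∨ 2 ^ e ≤ a ∧ 2 ^ e ≤ b) :
    (X 0 : MvPolynomial (Fin 2) R) ^ a * (X 0 + X 1 ^ 2) ^ b ∈ bracketPow R (2 * 2 ^ e) := by
  set I := bracketPow R (2 * 2 ^ e)
  rcases h with ha | hb | ⟨ha, hb⟩
  · refine pow_mul_pow_mem_of_le (b₀ := 0) ?_ ha (Nat.zero_le b)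
    simpa using X_zero_pow_mem_bracketPow (R := R) _
  · refine pow_mul_pow_mem_of_le (a₀ := 0) ?_ (Nat.zero_le a) hb
    rw [pow_zero, one_mul, mul_comm, pow_mul, X_zero_add_X_one_sq_pow_two_pow, add_sq,
      ← pow_mul, mul_comm (2 ^ e)]
    exact I.add_mem (I.add_mem (X_zero_pow_mem_bracketPow _) (I.mul_mem_left _
      (X_one_pow_mem_bracketPow _))) (I.mul_mem_left _ (X_one_pow_mem_bracketPow _))
  · refine pow_mul_pow_mem_of_le ?_ ha hb
    rw [X_zero_add_X_one_sq_pow_two_pow, mul_add, ← pow_add, ← two_mul]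
    exact I.add_mem (X_zero_pow_mem_bracketPow _) (I.mul_mem_left _ (X_one_pow_mem_bracketPow _))

/-- Modulo `y^{2p}`, multiplying by `F^p = x^p + y^{2p}` is multiplying by `x^p`. -/
lemma X_zero_pow_mul_X_zero_add_X_one_sq_pow_eq (e a b : ℕ) (hb : 2 ^ e ≤ b) :
    (X 0 : MvPolynomial (Fin 2) R) ^ a * (X 0 + X 1 ^ 2) ^ b =
      X 0 ^ (a + 2 ^ e) * (X 0 + X 1 ^ 2) ^ (b - 2 ^ e) +
        X 1 ^ (2 * 2 ^ e) * (X 0 ^ a * (X 0 + X 1 ^ 2) ^ (b - 2 ^ e)) := by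
  conv_lhs => rw [← Nat.add_sub_cancel' hb, pow_add, X_zero_add_X_one_sq_pow_two_pow]
  ring

lemma X_zero_pow_mul_X_zero_add_X_one_sq_pow_notMem_iff [Nontrivial R] (e a b : ℕ) :
    (X 0 : MvPolynomial (Fin 2) R) ^ a * (X 0 + X 1 ^ 2) ^ b ∉ bracketPow R (2 * 2 ^ e) ↔
      a < 2 * 2 ^ e ∧ b < 2 ^ e ∨ a < 2 ^ e ∧ 2 ^ e ≤ b ∧ b < 2 * 2 ^ e := by
  constructor
  · refine fun h => by_contra fun hc => h ?_
    exact X_zero_pow_mul_X_zero_add_X_one_sq_pow_mem (by omega)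
  · rintro (⟨ha, hb⟩ | ⟨ha, hb, hb'⟩)
    · exact X_zero_pow_mul_X_zero_add_X_one_sq_pow_notMem ha (by omega)
    · intro hmem
      rw [X_zero_pow_mul_X_zero_add_X_one_sq_pow_eq e a b hb] at hmem
      refine X_zero_pow_mul_X_zero_add_X_one_sq_pow_notMem (R := R) (q := 2 * 2 ^ e)
        (a := a + 2 ^ e) (b := b - 2 ^ e) (by omega) (by omega) ?_
      exact (Ideal.add_mem_iff_left _ (Ideal.mul_mem_right _ _ (X_one_pow_mem_bracketPow _))).mp
        hmem

lemma ncard_X_zero_pow_mul_X_zero_add_X_one_sq_pow_notMem [Nontrivial R] (e : ℕ) :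
    {n : ℕ × ℕ | (X 0 : MvPolynomial (Fin 2) R) ^ n.1 * (X 0 + X 1 ^ 2) ^ n.2 ∉
      bracketPow R (2 * 2 ^ e)}.ncard = 3 * 4 ^ e := by
  have hset : {n : ℕ × ℕ | (X 0 : MvPolynomial (Fin 2) R) ^ n.1 * (X 0 + X 1 ^ 2) ^ n.2 ∉
      bracketPow R (2 * 2 ^ e)} =
      ↑(Finset.range (2 * 2 ^ e) ×ˢ Finset.range (2 ^ e) ∪
        Finset.range (2 ^ e) ×ˢ Finset.Ico (2 ^ e) (2 * 2 ^ e)) := by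
    ext ⟨a, b⟩
    simp only [Set.mem_ofPred_eq, X_zero_pow_mul_X_zero_add_X_one_sq_pow_notMem_iff,
      Finset.coe_union, Finset.coe_product, Set.mem_union, Set.mem_prod, Finset.coe_range,
      Finset.coe_Ico, Set.mem_Iio, Set.mem_Ico]
  have hdisj : Disjoint (Finset.range (2 * 2 ^ e) ×ˢ Finset.range (2 ^ e))
      (Finset.range (2 ^ e) ×ˢ Finset.Ico (2 ^ e) (2 * 2 ^ e)) := by
    simp only [Finset.disjoint_left, Finset.mem_product, Finset.mem_range, Finset.mem_Ico]
    omega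
  rw [hset, Set.ncard_coe_finset, Finset.card_union_of_disjoint hdisj, Finset.card_product,
    Finset.card_product, Finset.card_range, Finset.card_range, Nat.card_Ico,
    show (4 : ℕ) ^ e = 2 ^ e * 2 ^ e by rw [← mul_pow]; norm_num, two_mul, Nat.add_sub_cancel]
  ring

end CharTwo

end FVolume

/-- In `R = F_2[x,y]`, the F-volume of the pair `(x), (x+y²)` with respect to
`m = (x,y)` equals `3/4`: with
`V(2^e) = {(n₁,n₂) : x^{n₁}(x+y²)^{n₂} ∉ (x^{2^e}, y^{2^e})}`, one has
`lim_{e→∞} Card(V(2^e))/4^e = 3/4`. -/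
theorem stmt18 :
    Filter.Tendsto
      (fun e : ℕ =>
        (Set.ncard {n : ℕ × ℕ |
            (X 0 : MvPolynomial (Fin 2) (ZMod 2)) ^ n.1 * (X 0 + (X 1) ^ 2) ^ n.2 ∉
              Ideal.span ({(X 0) ^ (2 ^ e), (X 1) ^ (2 ^ e)} :
                Set (MvPolynomial (Fin 2) (ZMod 2)))} : ℝ) / 4 ^ e)
      Filter.atTop (nhds (3 / 4)) := by
  refine (Filter.tendsto_add_atTop_iff_nat 1).mp (tendsto_const_nhds.congr fun e => ?_)
  have hcount := FVolume.ncard_X_zero_pow_mul_X_zero_add_X_one_sq_pow_notMem (R := ZMod 2) e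
  rw [FVolume.bracketPow, ← pow_succ'] at hcount
  rw [hcount, Nat.cast_mul, Nat.cast_pow, pow_succ]
  field_simp
  norm_num
end
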